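/- arXiv:1510.05435 — 9 statements merged into one kernel-verified Lean document; each statement's English description precedes it below -/
import Mathlib

section
/- Let K and D be positive integers with D dividing K and D < K. Consider the index coding problem over GF(2) with K messages x_1,...,x_K where receiver R_k demands x_k and has side information {x_{k+D}} (indices mod K, in {1,...,K}). Then the code consisting of the K−D symbols y_{i,j} = x_{i+(j−1)D} + x_{i+jD} for i = 1,...,D and j = 1,...,K/D − 1 allows every receiver to decode its demanded message: for k ≤ K−D, receiver R_k decodes x_k from the single symbol x_k + x_{k+D}; for k > K−D, adding the K/D − 1 symbols x_k + x_{k−D}, x_{k−D} + x_{k−2D}, ..., x_{(k mod D)+D} + x_{k mod D} yields x_k + x_{k mod D}, from which x_k is decoded using the side information x_{k mod D}. -/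
/-- Standard basis vector over GF(2) for message index `k` (messages indexed by `ZMod K`,
i.e. index arithmetic is modulo `K`). -/
def e (K : ℕ) (k : ZMod K) : ZMod K → ZMod 2 := Pi.single k 1

/-- Receiver `k` can decode its demanded message `x_k`: the demand vector lies in the GF(2)-span
of the broadcast code symbols `C` together with its side-information messages `side`. -/
def Decodes (K : ℕ) (C : Set (ZMod K → ZMod 2)) (side : Set (ZMod K)) (k : ZMod K) : Prop :=
  e K k ∈ Submodule.span (ZMod 2) (C ∪ e K '' side)

/-- A 0-1 matrix over GF(2) fits the directed graph with edge relation `E`: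
unit diagonal, and zero outside the diagonal and edge set. -/
def Fits {V : Type*} (E : V → V → Prop) (A : Matrix V V (ZMod 2)) : Prop :=
  (∀ i, A i i = 1) ∧ ∀ i j, i ≠ j → ¬ E i j → A i j = 0

lemma cancel_mid {K : ℕ} (u v w : ZMod K → ZMod 2) (h : v + v = 0) :
    u + v + (v + w) = u + w := by
  rw [add_assoc, ← add_assoc v v w, h, zero_add]

lemma two_add_self {K : ℕ} (v : ZMod K → ZMod 2) : v + v = 0 := by
  funext x
  have : ∀ a : ZMod 2, a + a = 0 := by decide
  exact this (v x)

lemma gen_mem (K D : ℕ) (hD : 0 < D) (hdvd : D ∣ K) (hlt : D < K) (n : ℕ)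
    (h1 : 1 ≤ n) (h2 : n ≤ K - D) :
    e K (n : ZMod K) + e K ((n + D : ℕ) : ZMod K) ∈
    {v : ZMod K → ZMod 2 | ∃ i j : ℕ, 1 ≤ i ∧ i ≤ D ∧ 1 ≤ j ∧ j ≤ K / D - 1 ∧
      v = e K ((i + (j - 1) * D : ℕ) : ZMod K) + e K ((i + j * D : ℕ) : ZMod K)} := by
  have hqd : K / D * D = K := Nat.div_mul_cancel hdvd
  have hq2 : 2 ≤ K / D := by
    rcases hdvd with ⟨q, rfl⟩
    have : 1 < q := by nlinarith
    rw [Nat.mul_div_cancel_left _ hD]; omega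
  refine ⟨(n - 1) % D + 1, (n - 1) / D + 1, le_add_self, ?_, le_add_self, ?_, ?_⟩
  · have := Nat.mod_lt (n - 1) hD; omega
  · have hlt' : (n - 1) / D < K / D - 1 := by
      rw [Nat.div_lt_iff_lt_mul hD]
      have : (K / D - 1) * D = K - D := by rw [Nat.sub_mul, one_mul, hqd]
      omega
    omega
  · have key := Nat.mod_add_div' (n - 1) D
    have hmd : (n - 1) % D + 1 + ((n - 1) / D + 1 - 1) * D = n := by
      simp only [Nat.add_sub_cancel]
      omega
    have hmd2 : (n - 1) % D + 1 + ((n - 1) / D + 1) * D = n + D := by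
      rw [add_mul, one_mul]
      omega
    rw [hmd, hmd2]

lemma tele (K D : ℕ) (hD : 0 < D) (hdvd : D ∣ K) (hlt : D < K) :
    ∀ t a : ℕ, 1 ≤ a → a + t * D ≤ K →
      e K (a : ZMod K) + e K ((a + t * D : ℕ) : ZMod K) ∈
      Submodule.span (ZMod 2)
        {v : ZMod K → ZMod 2 | ∃ i j : ℕ, 1 ≤ i ∧ i ≤ D ∧ 1 ≤ j ∧ j ≤ K / D - 1 ∧
          v = e K ((i + (j - 1) * D : ℕ) : ZMod K) + e K ((i + j * D : ℕ) : ZMod K)} := by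
  intro t
  induction t with
  | zero =>
    intro a ha hK
    have h0 : ((a + 0 * D : ℕ) : ZMod K) = (a : ZMod K) := by norm_num
    rw [h0]
    have hz : e K (a : ZMod K) + e K (a : ZMod K) = (0 : ZMod K → ZMod 2) :=
      two_add_self _
    rw [hz]
    exact Submodule.zero_mem _
  | succ t ih =>
    intro a ha hK
    have hK' : a + t * D ≤ K := by
      have : (t + 1) * D = t * D + D := by ring
      omega
    have h1 : 1 ≤ a + t * D := by omega
    have h2 : a + t * D ≤ K - D := by
      have : (t + 1) * D = t * D + D := by ring
      omega
    have hgen := Submodule.subset_span (R := ZMod 2) (gen_mem K D hD hdvd hlt (a + t * D) h1 h2)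
    have hih := ih a ha hK'
    have hmem := Submodule.add_mem _ hih hgen
    rw [cancel_mid _ _ _ (two_add_self _)] at hmem
    have hc : (a + (t + 1) * D : ℕ) = a + t * D + D := by ring
    rw [hc]
    exact hmem

/-- Case I code `x_{i+(j-1)D} + x_{i+jD}` lets every receiver decode. -/
theorem stmt0 (K D : ℕ) (hD : 0 < D) (hdvd : D ∣ K) (hlt : D < K) :
    ∀ k : ℕ, 1 ≤ k → k ≤ K →
      Decodes K
        {v | ∃ i j : ℕ, 1 ≤ i ∧ i ≤ D ∧ 1 ≤ j ∧ j ≤ K / D - 1 ∧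
          v = e K ((i + (j - 1) * D : ℕ) : ZMod K) + e K ((i + j * D : ℕ) : ZMod K)}
        {((k + D : ℕ) : ZMod K)} ((k : ℕ) : ZMod K) := by
  intro k hk1 hkK
  unfold Decodes
  set C : Set (ZMod K → ZMod 2) :=
    {v | ∃ i j : ℕ, 1 ≤ i ∧ i ≤ D ∧ 1 ≤ j ∧ j ≤ K / D - 1 ∧
      v = e K ((i + (j - 1) * D : ℕ) : ZMod K) + e K ((i + j * D : ℕ) : ZMod K)} with hC
  have hside : e K ((k + D : ℕ) : ZMod K) ∈
      Submodule.span (ZMod 2) (C ∪ e K '' {((k + D : ℕ) : ZMod K)}) :=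
    Submodule.subset_span (Or.inr ⟨_, rfl, rfl⟩)
  have hsum : e K (k : ZMod K) + e K ((k + D : ℕ) : ZMod K) ∈ Submodule.span (ZMod 2) C := by
    by_cases hcase : k ≤ K - D
    · have h := tele K D hD hdvd hlt 1 k hk1 (by omega)
      have h1 : (k + 1 * D : ℕ) = k + D := by ring
      rw [h1, ← hC] at h
      exact h
    · -- k > K - D
      have hqd : K / D * D = K := Nat.div_mul_cancel hdvd
      have hKD : (K / D - 1) * D = K - D := by rw [Nat.sub_mul, one_mul, hqd]
      have hq2 : 2 ≤ K / D := by
        rcases hdvd with ⟨q, rfl⟩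
        have : 1 < q := by nlinarith
        rw [Nat.mul_div_cancel_left _ hD] at *; omega
      set a := k + D - K with ha
      have ha1 : 1 ≤ a := by omega
      have hat : a + (K / D - 1) * D = k := by omega
      have h := tele K D hD hdvd hlt (K / D - 1) a ha1 (by omega)
      rw [hat, ← hC] at h
      have hcast : ((k + D : ℕ) : ZMod K) = (a : ZMod K) := by
        have : (k + D : ℕ) = a + K := by omega
        rw [this]
        push_cast
        simp [ZMod.natCast_self]
      rw [hcast, add_comm]
      exact h
  have hsum' : e K (k : ZMod K) + e K ((k + D : ℕ) : ZMod K) ∈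
      Submodule.span (ZMod 2) (C ∪ e K '' {((k + D : ℕ) : ZMod K)}) :=
    Submodule.span_mono Set.subset_union_left hsum
  have := Submodule.add_mem _ hsum' hside
  have heq : e K (k : ZMod K) =
      e K (k : ZMod K) + e K ((k + D : ℕ) : ZMod K) + e K ((k + D : ℕ) : ZMod K) := by
    rw [add_assoc, two_add_self, add_zero]
  rw [heq]
  exact this
end

section
/- Let K and D be positive integers with D dividing K, D < K, and let each receiver R_k (k = 1,...,K) have side information exactly {x_{k+D mod K}}. Any valid scalar linear index code over GF(2) for this problem has length at least K − D; equivalently, the minrank over GF(2) of the side information graph (with vertex set {1,...,K} and a single out-edge from k to k+D mod K) is exactly K − D. -/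
lemma z2 : ∀ a b : ZMod 2, a + b = 0 → a = b := by decide

/-- key index identity : stepping `K/D - i.val/D` times by `D` from `i` lands on the
representative `i.val % D`. -/
lemma idx (K D : ℕ) [NeZero K] (hD : 0 < D) (hdvd : D ∣ K) (i : ZMod K) :
    i + ((K / D - i.val / D : ℕ) : ZMod K) * (D : ℕ) = ((i.val % D : ℕ) : ZMod K) := by
  have h1 : ((i.val : ℕ) : ZMod K) = i := by
    rw [ZMod.natCast_val, ZMod.cast_id]
  have key : i.val + (K / D - i.val / D) * D = i.val % D + K := by
    have h2 : D * (i.val / D) + i.val % D = i.val := Nat.div_add_mod _ _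
    have hq : i.val / D ≤ K / D := Nat.div_le_div_right (ZMod.val_lt i).le
    have h3 : i.val / D + (K / D - i.val / D) = K / D := Nat.add_sub_cancel' hq
    set a := i.val / D with ha
    set r := i.val % D with hr
    calc i.val + (K / D - a) * D = D * a + r + (K / D - a) * D := by rw [h2]
      _ = r + D * (a + (K / D - a)) := by ring
      _ = r + K := by rw [h3, Nat.mul_div_cancel' hdvd]
  have h2 : ((i.val + (K / D - i.val / D) * D : ℕ) : ZMod K)
      = ((i.val % D + K : ℕ) : ZMod K) := by rw [key]
  push_cast [ZMod.natCast_self] at h2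
  rw [h1] at h2
  simpa using h2

lemma hDne (K D : ℕ) [NeZero K] (hD : 0 < D) (hlt : D < K) : (D : ZMod K) ≠ 0 := by
  rw [Ne, ZMod.natCast_eq_zero_iff]
  intro h
  exact absurd (Nat.le_of_dvd hD h) (not_le.mpr hlt)

lemma mulVec_fit {K D : ℕ} [NeZero K] (hne : (D : ZMod K) ≠ 0)
    {A : Matrix (ZMod K) (ZMod K) (ZMod 2)}
    (hA : Fits (fun i j => j = i + (D : ZMod K)) A) (v : ZMod K → ZMod 2) (i : ZMod K) :
    A.mulVec v i = v i + A i (i + (D : ZMod K)) * v (i + (D : ZMod K)) := by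
  classical
  have hii : i ≠ i + (D : ZMod K) := fun h => hne (left_eq_add.mp h)
  rw [Matrix.mulVec, dotProduct]
  rw [← Finset.sum_subset (Finset.subset_univ ({i, i + (D : ZMod K)} : Finset (ZMod K)))
      (by
        intro x _ hx
        simp only [Finset.mem_insert, Finset.mem_singleton, not_or] at hx
        rw [hA.2 i x (Ne.symm hx.1) hx.2, zero_mul])]
  rw [Finset.sum_pair hii, hA.1 i, one_mul]

/-- lower bound `K-D` on code length and minrank exactly `K-D` for the graph
with single out-edge `k → k+D`. -/
theorem stmt1 (K D : ℕ) [NeZero K] (hD : 0 < D) (hdvd : D ∣ K) (hlt : D < K) :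
    (∀ (N : ℕ) (y : Fin N → ZMod K → ZMod 2),
        (∀ k : ZMod K, Decodes K (Set.range y) {k + (D : ZMod K)} k) → K - D ≤ N) ∧
    (∀ A : Matrix (ZMod K) (ZMod K) (ZMod 2),
        Fits (fun i j => j = i + (D : ZMod K)) A → K - D ≤ A.rank) ∧
    (∃ A : Matrix (ZMod K) (ZMod K) (ZMod 2),
        Fits (fun i j => j = i + (D : ZMod K)) A ∧ A.rank = K - D) := by
  classical
  haveI : NeZero D := ⟨hD.ne'⟩
  have hne : (D : ZMod K) ≠ 0 := hDne K D hD hlt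
  have hii : ∀ i : ZMod K, i ≠ i + (D : ZMod K) :=
    fun i h => hne (left_eq_add.mp h)
  have hcardK : Module.finrank (ZMod 2) (ZMod K → ZMod 2) = K := by
    rw [Module.finrank_pi, ZMod.card]
  -- the natural projection and section between `ZMod K` and `ZMod D`
  set p : ZMod K → ZMod D := fun i => ((i.val : ℕ) : ZMod D) with hp
  set g : ZMod D → ZMod K := fun j => ((j.val : ℕ) : ZMod K) with hg
  have hmodK : ∀ a : ℕ, ((a % K : ℕ) : ZMod D) = (a : ZMod D) := by
    intro a
    have hK0 : ((K : ℕ) : ZMod D) = 0 := (ZMod.natCast_eq_zero_iff K D).mpr hdvd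
    conv_rhs => rw [← Nat.div_add_mod a K]
    push_cast [hK0]
    ring
  have hpD : ∀ i : ZMod K, p (i + (D : ZMod K)) = p i := by
    intro i
    have hv : ((D : ZMod K)).val = D := by
      rw [ZMod.val_natCast, Nat.mod_eq_of_lt hlt]
    simp only [hp, ZMod.val_add, hv, hmodK]
    push_cast [ZMod.natCast_self]
    ring
  have hpg : ∀ j : ZMod D, p (g j) = j := by
    intro j
    have hjv : ((j.val : ℕ) : ZMod K).val = j.val := by
      rw [ZMod.val_natCast, Nat.mod_eq_of_lt (lt_trans (ZMod.val_lt j) hlt)]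
    simp only [hp, hg, hjv]
    rw [ZMod.natCast_val, ZMod.cast_id]
  have hpsurj : Function.Surjective p := fun j => ⟨g j, hpg j⟩
  have hgval : ∀ i : ZMod K, g (p i) = ((i.val % D : ℕ) : ZMod K) := by
    intro i
    have : (p i).val = i.val % D := by
      rw [hp, ZMod.val_natCast]
    simp only [hg, this]
  refine ⟨?_, ?_, ?_⟩
  · -- Part 1 : code length lower bound
    intro N y hy
    set W : Submodule (ZMod 2) (ZMod K → ZMod 2) := Submodule.span (ZMod 2) (Set.range y)
      with hW
    have hdec : ∀ k : ZMod K,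
        e K k ∈ W ⊔ Submodule.span (ZMod 2) {e K (k + (D : ZMod K))} := by
      intro k
      have h := hy k
      rwa [Decodes, Set.image_singleton, Submodule.span_union] at h
    have main : ∀ (m : ℕ) (k : ZMod K),
        e K k ∈ W ⊔ Submodule.span (ZMod 2) {e K (k + (m : ZMod K) * (D : ℕ))} := by
      intro m
      induction m with
      | zero =>
        intro k
        simpa using Submodule.mem_sup_right (Submodule.subset_span (Set.mem_singleton _))
      | succ m ih =>
        intro k
        have h1 := ih k
        have h2 : Submodule.span (ZMod 2) {e K (k + (m : ZMod K) * (D : ℕ))} ≤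
            W ⊔ Submodule.span (ZMod 2) {e K (k + ((m + 1 : ℕ) : ZMod K) * (D : ℕ))} := by
          rw [Submodule.span_le]
          rintro x hx
          rw [Set.mem_singleton_iff] at hx
          subst hx
          have h3 := hdec (k + (m : ZMod K) * (D : ℕ))
          have h4 : k + (m : ZMod K) * (D : ℕ) + (D : ZMod K)
              = k + ((m + 1 : ℕ) : ZMod K) * (D : ℕ) := by push_cast; ring
          rwa [h4] at h3
        exact (sup_le le_sup_left h2) h1
    set S : Set (ZMod K) := Set.range g with hS
    have cover : ∀ k : ZMod K, e K k ∈ W ⊔ Submodule.span (ZMod 2) (e K '' S) := by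
      intro k
      have h1 := main (K / D - k.val / D) k
      rw [idx K D hD hdvd k] at h1
      have h2 : Submodule.span (ZMod 2) {e K ((k.val % D : ℕ) : ZMod K)} ≤
          Submodule.span (ZMod 2) (e K '' S) := by
        apply Submodule.span_mono
        rw [Set.singleton_subset_iff]
        refine ⟨((k.val % D : ℕ) : ZMod K), ⟨p k, ?_⟩, rfl⟩
        rw [← hgval k]
      exact (sup_le le_sup_left (h2.trans le_sup_right)) h1
    have hspanall : Submodule.span (ZMod 2) (Set.range (e K)) = ⊤ := by
      rw [eq_top_iff]
      intro f _
      have hf : f = ∑ i : ZMod K, f i • e K i := by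
        ext j
        rw [Finset.sum_apply]
        simp [e, Pi.single_apply, Finset.sum_ite_eq']
      rw [hf]
      exact Submodule.sum_mem _
        (fun i _ => Submodule.smul_mem _ _ (Submodule.subset_span ⟨i, rfl⟩))
    have htop : W ⊔ Submodule.span (ZMod 2) (e K '' S) = ⊤ := by
      rw [eq_top_iff, ← hspanall, Submodule.span_le]
      rintro x ⟨k, rfl⟩
      exact cover k
    have h2 : Module.finrank (ZMod 2) ↥(W ⊔ Submodule.span (ZMod 2) (e K '' S)) = K := by
      rw [htop, finrank_top, hcardK]
    have h3 := Submodule.finrank_sup_add_finrank_inf_eq W (Submodule.span (ZMod 2) (e K '' S))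
    have h4 : Module.finrank (ZMod 2) W ≤ N := by
      have := finrank_range_le_card (R := ZMod 2) y
      rw [Set.finrank] at this
      simpa using this
    have h5 : Module.finrank (ZMod 2) ↥(Submodule.span (ZMod 2) (e K '' S)) ≤ D := by
      have himg : e K '' S = Set.range (fun j : ZMod D => e K (g j)) := by
        rw [hS, ← Set.range_comp]; rfl
      rw [himg]
      have := finrank_range_le_card (R := ZMod 2) (fun j : ZMod D => e K (g j))
      rw [Set.finrank] at this
      simpa [ZMod.card] using this
    omega
  · -- Part 2 : minrank lower bound
    intro A hA
    have hrn := LinearMap.finrank_range_add_finrank_ker (A.mulVecLin)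
    rw [hcardK] at hrn
    suffices hker : Module.finrank (ZMod 2) (LinearMap.ker A.mulVecLin) ≤ D by
      rw [Matrix.rank]; omega
    have hle : Module.finrank (ZMod 2) (ZMod D → ZMod 2) = D := by
      rw [Module.finrank_pi, ZMod.card]
    rw [← hle]
    apply LinearMap.finrank_le_finrank_of_injective
      (f := (LinearMap.funLeft (ZMod 2) (ZMod 2) g).comp
        (Submodule.subtype (LinearMap.ker A.mulVecLin)))
    rw [← LinearMap.ker_eq_bot, LinearMap.ker_eq_bot']
    rintro ⟨v, hv⟩ h0
    rw [LinearMap.mem_ker] at hv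
    have hrel : ∀ x : ZMod K, v x = A x (x + (D : ZMod K)) * v (x + (D : ZMod K)) := by
      intro x
      have := congrFun hv x
      rw [Matrix.mulVecLin_apply, mulVec_fit hne hA v x, Pi.zero_apply] at this
      exact z2 _ _ this
    have h0' : ∀ j : ZMod D, v (g j) = 0 := fun j => by simpa using congrFun h0 j
    have prop : ∀ (m : ℕ) (x : ZMod K), v (x + (m : ZMod K) * (D : ℕ)) = 0 → v x = 0 := by
      intro m
      induction m with
      | zero => intro x h; simpa using h
      | succ m ih =>
        intro x h
        have h' : v ((x + (m : ZMod K) * (D : ℕ)) + (D : ZMod K)) = 0 := by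
          have h4 : (x + (m : ZMod K) * (D : ℕ)) + (D : ZMod K)
              = x + ((m + 1 : ℕ) : ZMod K) * (D : ℕ) := by push_cast; ring
          rwa [h4]
        have h'' : v (x + (m : ZMod K) * (D : ℕ)) = 0 := by
          rw [hrel (x + (m : ZMod K) * (D : ℕ)), h', mul_zero]
        exact ih x h''
    have hv0 : v = 0 := by
      funext i
      have h1 : v (((i.val % D : ℕ) : ZMod K)) = 0 := by
        rw [← hgval i]; exact h0' (p i)
      have h2 := prop (K / D - i.val / D) i
      rw [idx K D hD hdvd i] at h2
      exact h2 h1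
    exact Subtype.ext hv0
  · -- Part 3 : achievability
    set A : Matrix (ZMod K) (ZMod K) (ZMod 2) :=
      fun i j => (if j = i then 1 else 0) + (if j = i + (D : ZMod K) then 1 else 0) with hAdef
    have hA : Fits (fun i j => j = i + (D : ZMod K)) A := by
      constructor
      · intro i
        simp [hAdef, hii i]
      · intro i j hij hEij
        simp [hAdef, Ne.symm hij, hEij]
    have hA1 : ∀ i : ZMod K, A i (i + (D : ZMod K)) = 1 := by
      intro i
      simp [hAdef, (hii i).symm]
    refine ⟨A, hA, ?_⟩
    set φ : (ZMod D → ZMod 2) →ₗ[ZMod 2] (ZMod K → ZMod 2) :=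
      LinearMap.funLeft (ZMod 2) (ZMod 2) p with hφ
    have hφinj : Function.Injective φ :=
      LinearMap.funLeft_injective_of_surjective (ZMod 2) (ZMod 2) p hpsurj
    have hkereq : LinearMap.ker A.mulVecLin = LinearMap.range φ := by
      apply le_antisymm
      · intro v hv
        rw [LinearMap.mem_ker] at hv
        have hrel : ∀ x : ZMod K, v (x + (D : ZMod K)) = v x := by
          intro x
          have := congrFun hv x
          rw [Matrix.mulVecLin_apply, mulVec_fit hne hA v x, hA1 x, one_mul] at this
          exact (z2 _ _ this).symm
        have prop : ∀ (m : ℕ) (x : ZMod K), v (x + (m : ZMod K) * (D : ℕ)) = v x := by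
          intro m
          induction m with
          | zero => intro x; simp
          | succ m ih =>
            intro x
            have h4 : x + ((m + 1 : ℕ) : ZMod K) * (D : ℕ)
                = (x + (m : ZMod K) * (D : ℕ)) + (D : ZMod K) := by push_cast; ring
            rw [h4, hrel, ih]
        refine ⟨fun j => v (g j), ?_⟩
        funext i
        rw [hφ, LinearMap.funLeft_apply, hgval i]
        have h2 := prop (K / D - i.val / D) i
        rw [idx K D hD hdvd i] at h2
        exact h2
      · rintro _ ⟨w, rfl⟩
        rw [LinearMap.mem_ker]
        funext i
        rw [Matrix.mulVecLin_apply, mulVec_fit hne hA _ i, hA1 i, one_mul]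
        have : φ w (i + (D : ZMod K)) = φ w i := by
          rw [hφ, LinearMap.funLeft_apply, LinearMap.funLeft_apply, hpD i]
        rw [this, Pi.zero_apply, CharTwo.add_self_eq_zero]
    have hkerD : Module.finrank (ZMod 2) (LinearMap.ker A.mulVecLin) = D := by
      rw [hkereq, LinearMap.finrank_range_of_inj hφinj, Module.finrank_pi, ZMod.card]
    have hrn := LinearMap.finrank_range_add_finrank_ker (A.mulVecLin)
    rw [hcardK, hkerD] at hrn
    rw [Matrix.rank]
    omega
end

section
/- Let K, D be positive integers with m = K − D dividing K, and set n = K/m. Consider the index coding problem over GF(2) where receiver R_k demands x_k and has side information {x_{k+m}, x_{k+2m}, ..., x_{k+(n−1)m}} (indices mod K in {1,...,K}). Then the code consisting of the m symbols y_i = x_i + x_{i+m} + x_{i+2m} + ... + x_{i+(n−1)m} for i = 1,...,m allows every receiver to decode its message using exactly one broadcast symbol, and this code has optimal length m = K − D. -/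
lemma shift_once (K n m a : ℕ) (hK : n * m = K) :
    ∑ t ∈ Finset.range n, e K ((a + m + t * m : ℕ) : ZMod K)
      = ∑ t ∈ Finset.range n, e K ((a + t * m : ℕ) : ZMod K) := by
  set f : ℕ → ZMod K → ZMod 2 := fun t => e K ((a + t * m : ℕ) : ZMod K) with hf
  have h1 : ∑ t ∈ Finset.range n, e K ((a + m + t * m : ℕ) : ZMod K)
      = ∑ t ∈ Finset.range n, f (t + 1) := by
    apply Finset.sum_congr rfl
    intro t _
    have h : a + m + t * m = a + (t + 1) * m := by ring
    rw [hf, h]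
  rw [h1]
  have h2 := Finset.sum_range_succ' f n
  have h3 := Finset.sum_range_succ f n
  have h4 : f n = f 0 := by
    have hz : ((n * m : ℕ) : ZMod K) = 0 := by rw [hK]; exact ZMod.natCast_self K
    simp only [hf]
    congr 1
    push_cast at hz ⊢
    rw [hz]
    ring
  rw [h4] at h3
  exact add_right_cancel (h2.symm.trans h3)

lemma shift_many (K n m a c : ℕ) (hK : n * m = K) :
    ∑ t ∈ Finset.range n, e K ((a + c * m + t * m : ℕ) : ZMod K)
      = ∑ t ∈ Finset.range n, e K ((a + t * m : ℕ) : ZMod K) := by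
  induction c with
  | zero => simp
  | succ c ih =>
      have h : ∑ t ∈ Finset.range n, e K ((a + (c + 1) * m + t * m : ℕ) : ZMod K)
          = ∑ t ∈ Finset.range n, e K ((a + c * m + m + t * m : ℕ) : ZMod K) := by
        apply Finset.sum_congr rfl
        intro t _
        have h' : a + (c + 1) * m + t * m = a + c * m + m + t * m := by ring
        rw [h']
      rw [h, shift_once K n m (a + c * m) hK, ih]

/-- Case II code of length `m = K-D`; every receiver decodes from one symbol,
and the length `K-D` is optimal. -/
theorem stmt2 (K D : ℕ) (hD : 0 < D) (hlt : D < K) (hdvd : (K - D) ∣ K) :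
    (∀ k : ℕ, 1 ≤ k → k ≤ K →
      ∃ c ∈ {v | ∃ i : ℕ, 1 ≤ i ∧ i ≤ K - D ∧
              v = ∑ t ∈ Finset.range (K / (K - D)), e K ((i + t * (K - D) : ℕ) : ZMod K)},
        Decodes K {c}
          {j | ∃ t : ℕ, 1 ≤ t ∧ t ≤ K / (K - D) - 1 ∧ j = ((k + t * (K - D) : ℕ) : ZMod K)}
          ((k : ℕ) : ZMod K)) ∧
    (∀ (N : ℕ) (y : Fin N → ZMod K → ZMod 2),
        (∀ k : ℕ, 1 ≤ k → k ≤ K →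
          Decodes K (Set.range y)
            {j | ∃ t : ℕ, 1 ≤ t ∧ t ≤ K / (K - D) - 1 ∧ j = ((k + t * (K - D) : ℕ) : ZMod K)}
            ((k : ℕ) : ZMod K)) → K - D ≤ N) := by
  haveI : NeZero K := ⟨by omega⟩
  set m := K - D with hm
  have hm0 : 0 < m := by omega
  have hmK : m < K := by omega
  set n := K / m with hn
  have hK : n * m = K := Nat.div_mul_cancel hdvd
  have hn1 : 1 ≤ n := by
    rcases Nat.eq_zero_or_pos n with h | h
    · rw [h] at hK; simp at hK; omega
    · exact h
  have hcast : ∀ a b : ℕ, a < K → b < K → (a : ZMod K) = (b : ZMod K) → a = b := by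
    intro a b ha hb h
    have := congrArg ZMod.val h
    rwa [ZMod.val_cast_of_lt ha, ZMod.val_cast_of_lt hb] at this
  have hchar : ∀ w : ZMod K → ZMod 2, w + w = 0 := by
    intro w
    funext x
    have : ∀ a : ZMod 2, a + a = 0 := by decide
    exact this (w x)
  constructor
  · -- achievability
    intro k hk1 hkK
    set i := (k - 1) % m + 1 with hi
    set c := (k - 1) / m with hc
    have hmod : (k - 1) % m + c * m = k - 1 := by
      rw [hc]; exact Nat.mod_add_div' (k - 1) m
    have hlt' := Nat.mod_lt (k - 1) hm0
    have hik : i + c * m = k := by omega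
    refine ⟨∑ t ∈ Finset.range n, e K ((i + t * m : ℕ) : ZMod K),
      ⟨i, by omega, by omega, rfl⟩, ?_⟩
    unfold Decodes
    have hv : ∑ t ∈ Finset.range n, e K ((i + t * m : ℕ) : ZMod K)
        = ∑ t ∈ Finset.range n, e K ((k + t * m : ℕ) : ZMod K) := by
      conv_rhs => rw [← hik]
      exact (shift_many K n m i c hK).symm
    obtain ⟨n', hn' ⟩ : ∃ n', n = n' + 1 := ⟨n - 1, by omega⟩
    have hsplit : ∑ t ∈ Finset.range n, e K ((k + t * m : ℕ) : ZMod K)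
        = e K ((k : ℕ) : ZMod K)
          + ∑ t ∈ Finset.range n', e K ((k + (t + 1) * m : ℕ) : ZMod K) := by
      have h0 : k + 0 * m = k := by ring
      rw [hn', Finset.sum_range_succ', h0, add_comm]
    have hek : e K ((k : ℕ) : ZMod K)
        = (∑ t ∈ Finset.range n, e K ((i + t * m : ℕ) : ZMod K))
          + ∑ t ∈ Finset.range n', e K ((k + (t + 1) * m : ℕ) : ZMod K) := by
      rw [hv, hsplit, add_assoc, hchar, add_zero]
    rw [hek]
    apply Submodule.add_mem
    · exact Submodule.subset_span (Or.inl rfl)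
    · apply Submodule.sum_mem
      intro t ht
      simp only [Finset.mem_range] at ht
      apply Submodule.subset_span
      right
      exact ⟨((k + (t + 1) * m : ℕ) : ZMod K), ⟨t + 1, by omega, by omega, rfl⟩, rfl⟩
  · -- converse
    intro N y hy
    classical
    let π : (ZMod K → ZMod 2) →ₗ[ZMod 2] (Fin m → ZMod 2) :=
      LinearMap.pi fun i => LinearMap.proj ((((i : ℕ) + 1 : ℕ) : ZMod K))
    have hπe : ∀ i : Fin m, π (e K ((((i : ℕ) + 1 : ℕ)) : ZMod K)) = Pi.single i 1 := by
      intro i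
      funext i'
      simp only [π, LinearMap.pi_apply, LinearMap.proj_apply, e, Pi.single_apply]
      by_cases h : i' = i
      · subst h; simp
      · rw [if_neg h, if_neg]
        intro hc
        apply h
        have := hcast _ _ (by omega) (by omega) hc
        exact Fin.ext (by omega)
    have hπside : ∀ j : ZMod K, (j.val = 0 ∨ m < j.val) → π (e K j) = 0 := by
      intro j hj
      funext i'
      simp only [π, LinearMap.pi_apply, LinearMap.proj_apply, e, Pi.single_apply, Pi.zero_apply]
      rw [if_neg]
      intro hc
      have hv : ((((i' : ℕ) + 1 : ℕ)) : ZMod K).val = (i' : ℕ) + 1 :=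
        ZMod.val_cast_of_lt (by omega)
      rw [← hc] at hj
      rw [hv] at hj
      omega
    set W := Submodule.span (ZMod 2) (Set.range (π ∘ y)) with hW
    have hsingle : ∀ i : Fin m, Pi.single i (1 : ZMod 2) ∈ W := by
      intro i
      have hd := hy ((i : ℕ) + 1) (by omega) (by omega)
      unfold Decodes at hd
      have h2 := Submodule.mem_map_of_mem (f := π) hd
      rw [Submodule.map_span] at h2
      rw [← hπe i]
      refine Submodule.span_le.mpr ?_ h2
      rintro v ⟨u, hu, rfl⟩
      rcases hu with ⟨j, rfl⟩ | ⟨jj, ⟨t, ht1, ht2, rfl⟩, rfl⟩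
      · exact Submodule.subset_span ⟨j, rfl⟩
      · have hiLt : (i : ℕ) < m := i.isLt
        have ht2' : t ≤ n - 1 := by rw [hn, hm]; exact ht2
        have hb1 : (i : ℕ) + 1 + t * m ≤ K := by
          have hle : t * m ≤ (n - 1) * m := Nat.mul_le_mul_right m ht2'
          have h2 : (n - 1) * m + m = n * m := by
            have hsub : n - 1 + 1 = n := by omega
            calc (n - 1) * m + m = (n - 1 + 1) * m := by ring
              _ = n * m := by rw [hsub]
          omega
        have hz : π (e K (((i : ℕ) + 1 + t * m : ℕ) : ZMod K)) = 0 := by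
          apply hπside
          rw [ZMod.val_natCast]
          rcases Nat.lt_or_ge ((i : ℕ) + 1 + t * m) K with h | h
          · right
            rw [Nat.mod_eq_of_lt h]
            have : 1 * m ≤ t * m := Nat.mul_le_mul_right m ht1
            omega
          · left
            have : (i : ℕ) + 1 + t * m = K := by omega
            rw [this, Nat.mod_self]
        rw [hz]
        exact W.zero_mem
    have htop : W = ⊤ := by
      rw [eq_top_iff, ← (Pi.basisFun (ZMod 2) (Fin m)).span_eq]
      apply Submodule.span_le.mpr
      rintro v ⟨i, rfl⟩
      simpa using hsingle i
    have hfin : Module.finrank (ZMod 2) (Fin m → ZMod 2) ≤ Fintype.card (Fin N) :=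
      finrank_le_of_span_eq_top htop
    rw [Module.finrank_pi, Fintype.card_fin, Fintype.card_fin] at hfin
    exact hfin
end

section
/- Let K be even and D an integer with K/2 < D < K such that m = D − K/2 divides K/2; set n = (K/2)/m. Consider the index coding problem over GF(2) where receiver R_k demands x_k and has side information {x_{k+K/2}, x_{k+D−K/2}, x_{k+D}} (indices mod K in {1,...,K}). Then the code with the m(n−1) = K − D symbols C_{i,j} = x_{i+jm} + x_{K/2+i+jm} + x_{i+(j+1)m} + x_{K/2+i+(j+1)m}, for i = 1,...,m and j = 0,...,n−2, allows every receiver R_k to decode x_k. In particular, for k = i + (n−1)m (i.e., K−D < k ≤ K/2), the sum of the n−1 symbols C_{i,0} + C_{i,1} + ... + C_{i,n−2} equals x_i + x_{K/2+i} + x_{i+(n−1)m} + x_{K/2+i+(n−1)m}, from which R_k decodes x_k. -/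
/-!
Put `h = K/2 = n m` and `f t = x_t + x_{t+h}`; since `2h = K`, `f` has period `h`. The symbol
`C_{i,j}` is `f (i + j m) + f (i + (j+1) m)`, and the side information of `R_k` is
`x_{k+h}, x_{k+m}, x_{k+m+h}`, so `R_k` decodes as soon as `f k + f (k+m)` lies in the span of
the code. For `1 ≤ k ≤ h - m` this is the symbol `C_{i,j}` with `k = i + j m`. For
`h - m < k ≤ h` the sum `∑_j C_{i,j}` with `i = k - (n-1) m` telescopes to
`f i + f k = f (k + m) + f k`, by periodicity. Periodicity of `k ↦ f k + f (k+m)` covers every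
other `k`.
-/

open Finset Submodule

section CodeSymbols

variable {V : Type*} [AddCommGroup V]

def codeSymbols (f : ℕ → V) (m n : ℕ) : Set V :=
  {v | ∃ i j, 1 ≤ i ∧ i ≤ m ∧ j ≤ n - 2 ∧ v = f (i + j * m) + f (i + (j + 1) * m)}

variable {f : ℕ → V} {m n : ℕ}

theorem add_shift_mem_codeSymbols {t : ℕ} (ht : 1 ≤ t) (ht' : t ≤ (n - 1) * m) :
    f t + f (t + m) ∈ codeSymbols f m n := by
  have hm : 0 < m := Nat.pos_of_ne_zero (by rintro rfl; omega)
  have hj : (t - 1) / m < n - 1 := Nat.div_lt_of_lt_mul (by rw [mul_comm]; omega)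
  have hdiv := Nat.mod_add_div' (t - 1) m
  refine ⟨(t - 1) % m + 1, (t - 1) / m, by omega, Nat.mod_lt _ hm, by omega, ?_⟩
  rw [add_one_mul, ← add_assoc, show (t - 1) % m + 1 + (t - 1) / m * m = t by omega]

variable [Module (ZMod 2) V]

theorem sum_range_add_succ (u : ℕ → V) (t : ℕ) :
    ∑ j ∈ range t, (u j + u (j + 1)) = u 0 + u t := by
  simpa only [ZModModule.sub_eq_add, add_comm] using sum_range_sub u t

theorem sum_codeSymbols (f : ℕ → V) (m n i : ℕ) :
    ∑ j ∈ range (n - 1), (f (i + j * m) + f (i + (j + 1) * m)) = f i + f (i + (n - 1) * m) := by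
  simpa using sum_range_add_succ (fun j => f (i + j * m)) (n - 1)

theorem add_shift_mem_span_of_lt (hf : Function.Periodic f (n * m)) (hn : 0 < n) {t : ℕ}
    (ht : (n - 1) * m < t) (ht' : t ≤ n * m) :
    f t + f (t + m) ∈ span (ZMod 2) (codeSymbols f m n) := by
  have hnm : (n - 1) * m + m = n * m := by
    rw [← add_one_mul, Nat.sub_one_add_one hn.ne']
  set i := t - (n - 1) * m
  have hsum : ∑ j ∈ range (n - 1), (f (i + j * m) + f (i + (j + 1) * m)) ∈
      span (ZMod 2) (codeSymbols f m n) :=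
    sum_mem fun j hj => subset_span ⟨i, j, by omega, by omega, by simp at hj; omega, rfl⟩
  rwa [sum_codeSymbols, ← hf i, show i + (n - 1) * m = t by omega,
    show i + n * m = t + m by omega, add_comm] at hsum

theorem add_shift_mem_span (hf : Function.Periodic f (n * m)) (hm : 0 < m) (hn : 0 < n)
    (k : ℕ) : f k + f (k + m) ∈ span (ZMod 2) (codeSymbols f m n) := by
  have hg : Function.Periodic (fun k => f k + f (k + m)) (n * m) := fun k => by
    simp only [add_right_comm k, hf k, hf (k + m)]
  have hwindow : ∀ t, 1 ≤ t → t ≤ n * m → f t + f (t + m) ∈ span (ZMod 2) (codeSymbols f m n) :=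
    fun t ht ht' => (le_or_gt t ((n - 1) * m)).elim
      (fun hle => subset_span (add_shift_mem_codeSymbols ht hle))
      (fun hlt => add_shift_mem_span_of_lt hf hn hlt ht')
  have hnm : 0 < n * m := Nat.mul_pos hn hm
  rw [← hg.map_mod_nat k]
  rcases Nat.eq_zero_or_pos (k % (n * m)) with h0 | hpos
  · have hperiod := hg.eq
    simp only [zero_add] at hperiod
    rw [h0, zero_add, ← hperiod]
    exact hwindow _ hnm le_rfl
  · exact hwindow _ hpos (Nat.mod_lt _ hnm).le

end CodeSymbols

theorem decodes_of_add_mem_span {K : ℕ} {C : Set (ZMod K → ZMod 2)} {k a b c : ZMod K}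
    (h : e K k + e K a + e K b + e K c ∈ span (ZMod 2) C) : Decodes K C {a, b, c} k := by
  have hside : ∀ x ∈ ({a, b, c} : Set (ZMod K)), e K x ∈ span (ZMod 2) (C ∪ e K '' {a, b, c}) :=
    fun x hx => subset_span (Or.inr ⟨x, hx, rfl⟩)
  have hC := span_mono (Set.subset_union_left (t := e K '' {a, b, c})) h
  unfold Decodes
  rw [show e K k = e K k + e K a + e K b + e K c - e K a - e K b - e K c by abel]
  exact sub_mem (sub_mem (sub_mem hC (hside a (by simp))) (hside b (by simp))) (hside c (by simp))

theorem stmt3_general (K D m n : ℕ) (hK2 : 2 ∣ K) (h1 : K / 2 < D)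
    (hm : m = D - K / 2) (hdvd : m ∣ K / 2) (hn : n = (K / 2) / m) :
    (∀ k : ℕ, 1 ≤ k → k ≤ K →
      Decodes K
        {v | ∃ i j : ℕ, 1 ≤ i ∧ i ≤ m ∧ j ≤ n - 2 ∧
          v = e K ((i + j * m : ℕ) : ZMod K) + e K ((K / 2 + i + j * m : ℕ) : ZMod K)
            + e K ((i + (j + 1) * m : ℕ) : ZMod K) + e K ((K / 2 + i + (j + 1) * m : ℕ) : ZMod K)}
        {((k + K / 2 : ℕ) : ZMod K), ((k + (D - K / 2) : ℕ) : ZMod K), ((k + D : ℕ) : ZMod K)}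
        ((k : ℕ) : ZMod K)) ∧
    (∀ i : ℕ, 1 ≤ i → i ≤ m →
      (∑ j ∈ Finset.range (n - 1),
        (e K ((i + j * m : ℕ) : ZMod K) + e K ((K / 2 + i + j * m : ℕ) : ZMod K)
          + e K ((i + (j + 1) * m : ℕ) : ZMod K) + e K ((K / 2 + i + (j + 1) * m : ℕ) : ZMod K)))
      = e K ((i : ℕ) : ZMod K) + e K ((K / 2 + i : ℕ) : ZMod K)
        + e K ((i + (n - 1) * m : ℕ) : ZMod K) + e K ((K / 2 + i + (n - 1) * m : ℕ) : ZMod K)) := by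
  have hnm : n * m = K / 2 := by rw [hn]; exact Nat.div_mul_cancel hdvd
  set f : ℕ → ZMod K → ZMod 2 := fun t => e K t + e K ((K / 2 + t : ℕ) : ZMod K)
  have hf : Function.Periodic f (n * m) := fun t => by
    simp only [f, hnm]
    rw [show K / 2 + (t + K / 2) = t + K by omega, Nat.cast_add t K, ZMod.natCast_self, add_zero,
      add_comm t, add_comm]
  refine ⟨fun k hk hkK => ?_, fun i _ _ => ?_⟩
  · have hn0 : 0 < n := Nat.pos_of_ne_zero (by rintro rfl; omega)
    have hC : {v | ∃ i j : ℕ, 1 ≤ i ∧ i ≤ m ∧ j ≤ n - 2 ∧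
          v = e K ((i + j * m : ℕ) : ZMod K) + e K ((K / 2 + i + j * m : ℕ) : ZMod K)
            + e K ((i + (j + 1) * m : ℕ) : ZMod K) + e K ((K / 2 + i + (j + 1) * m : ℕ) : ZMod K)}
        = codeSymbols f m n := by
      simp only [codeSymbols, f, ← add_assoc]
    rw [hC, ← hm]
    apply decodes_of_add_mem_span
    convert add_shift_mem_span hf (by omega) hn0 k using 1
    simp only [f]
    rw [show k + D = K / 2 + (k + m) by omega, add_comm k (K / 2)]
    abel
  · simpa only [f, ← add_assoc] using sum_codeSymbols f m n i

/-- Case III code; every receiver decodes, and the sum of the `n-1` symbols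
`C_{i,0} + ... + C_{i,n-2}` telescopes as claimed. -/
theorem stmt3 (K D m n : ℕ) (hK2 : 2 ∣ K) (h1 : K / 2 < D) (h2 : D < K)
    (hm : m = D - K / 2) (hdvd : m ∣ K / 2) (hn : n = (K / 2) / m) :
    (∀ k : ℕ, 1 ≤ k → k ≤ K →
      Decodes K
        {v | ∃ i j : ℕ, 1 ≤ i ∧ i ≤ m ∧ j ≤ n - 2 ∧
          v = e K ((i + j * m : ℕ) : ZMod K) + e K ((K / 2 + i + j * m : ℕ) : ZMod K)
            + e K ((i + (j + 1) * m : ℕ) : ZMod K) + e K ((K / 2 + i + (j + 1) * m : ℕ) : ZMod K)}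
        {((k + K / 2 : ℕ) : ZMod K), ((k + (D - K / 2) : ℕ) : ZMod K), ((k + D : ℕ) : ZMod K)}
        ((k : ℕ) : ZMod K)) ∧
    (∀ i : ℕ, 1 ≤ i → i ≤ m →
      (∑ j ∈ Finset.range (n - 1),
        (e K ((i + j * m : ℕ) : ZMod K) + e K ((K / 2 + i + j * m : ℕ) : ZMod K)
          + e K ((i + (j + 1) * m : ℕ) : ZMod K) + e K ((K / 2 + i + (j + 1) * m : ℕ) : ZMod K)))
      = e K ((i : ℕ) : ZMod K) + e K ((K / 2 + i : ℕ) : ZMod K)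
        + e K ((i + (n - 1) * m : ℕ) : ZMod K) + e K ((K / 2 + i + (n - 1) * m : ℕ) : ZMod K)) :=
  stmt3_general K D m n hK2 h1 hm hdvd hn
end

section
/- Let K be even and D a positive integer with D < K/2 such that m = K/2 − D divides D; set p = D/m and n = K/m. Consider the index coding problem over GF(2) where receiver R_k demands x_k and has side information {x_{k+m}, x_{k+2m}, ..., x_{k+pm}} (indices mod K in {1,...,K}). Then the code consisting of the m(p+2) = K − D symbols x_{i+lm} + x_{i+(l+1)m} + ... + x_{i+(l+p)m} for i = 1,...,m and l = 0,1,...,p+1 (the last symbol for each i being x_{i+(p+1)m} + x_{i+(p+2)m} + ... + x_{i+(n−1)m} when indices wrap) allows every receiver to decode its demanded message, and hence K − D broadcast symbols suffice for this problem. -/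
/-- Case IV code of `m(p+2) = K-D` symbols; every receiver decodes. -/
theorem stmt4 (K D m p n : ℕ) (hK2 : 2 ∣ K) (hD : 0 < D) (h1 : D < K / 2)
    (hm : m = K / 2 - D) (hdvd : m ∣ D) (hp : p = D / m) (hn : n = K / m) :
    m * (p + 2) = K - D ∧
    (∀ k : ℕ, 1 ≤ k → k ≤ K →
      Decodes K
        {v | ∃ i l : ℕ, 1 ≤ i ∧ i ≤ m ∧ l ≤ p + 1 ∧
          v = ∑ t ∈ Finset.range (p + 1), e K ((i + (l + t) * m : ℕ) : ZMod K)}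
        {j | ∃ t : ℕ, 1 ≤ t ∧ t ≤ p ∧ j = ((k + t * m : ℕ) : ZMod K)}
        ((k : ℕ) : ZMod K)) := by
  have hm0 : 0 < m := by omega
  have hDm : m * p = D := by rw [hp]; exact Nat.mul_div_cancel' hdvd
  have hKlin : K = 2 * D + 2 * m := by omega
  have hK : K = m * (2 * p + 2) := by
    have h2 : m * (2 * p + 2) = 2 * (m * p) + 2 * m := by ring
    rw [hDm] at h2; omega
  have hp1 : 1 ≤ p := by
    rcases Nat.eq_zero_or_pos p with h | h
    · subst h; simp at hDm; omega
    · exact h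
  have hpart1 : m * (p + 2) = K - D := by
    have h2 : m * (p + 2) = m * p + 2 * m := by ring
    rw [hDm] at h2; omega
  refine ⟨hpart1, ?_⟩
  intro k hk1 hkK
  set i : ℕ := (k - 1) % m + 1 with hi_def
  set s : ℕ := (k - 1) / m with hs_def
  have hi1 : 1 ≤ i := by omega
  have hi2 : i ≤ m := by
    have := Nat.mod_lt (k - 1) hm0
    omega
  have hks : k = i + s * m := by
    have h : m * s + (k - 1) % m = k - 1 := by rw [hs_def]; exact Nat.div_add_mod _ _
    have hc : s * m = m * s := Nat.mul_comm _ _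
    omega
  have hs : s ≤ 2 * p + 1 := by
    have hlt : k - 1 < (2 * p + 2) * m := by
      have : K = (2 * p + 2) * m := by rw [hK]; ring
      omega
    have := (Nat.div_lt_iff_lt_mul hm0).mpr hlt
    omega
  set g : ℕ → (ZMod K → ZMod 2) := fun j => e K ((i + j * m : ℕ) : ZMod K) with hg_def
  have hper : ∀ j, g (j + (2 * p + 2)) = g j := by
    intro j
    simp only [hg_def]
    congr 1
    have h2 : (i + (j + (2 * p + 2)) * m : ℕ) = (i + j * m) + K := by rw [hK]; ring
    rw [h2]
    push_cast
    simp
  set W : ℕ → (ZMod K → ZMod 2) := fun c => ∑ t ∈ Finset.range (p + 1), g (c + t) with hW_def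
  set Cset : Set (ZMod K → ZMod 2) :=
    {v | ∃ i l : ℕ, 1 ≤ i ∧ i ≤ m ∧ l ≤ p + 1 ∧
      v = ∑ t ∈ Finset.range (p + 1), e K ((i + (l + t) * m : ℕ) : ZMod K)} with hC_def
  have hWin : ∀ c, c ≤ p + 1 → W c ∈ Submodule.span (ZMod 2) Cset := by
    intro c hc
    apply Submodule.subset_span
    exact ⟨i, c, hi1, hi2, hc, rfl⟩
  -- shift invariance of the full sum
  have hF : ∀ c, ∑ j ∈ Finset.range (2 * p + 2), g (c + 1 + j)
      = ∑ j ∈ Finset.range (2 * p + 2), g (c + j) := by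
    intro c
    have hL : ∑ j ∈ Finset.range (2 * p + 2), g (c + 1 + j)
        = (∑ j ∈ Finset.range (2 * p + 1), g (c + 1 + j)) + g (c + 1 + (2 * p + 1)) :=
      Finset.sum_range_succ _ _
    have hR : ∑ j ∈ Finset.range (2 * p + 2), g (c + j)
        = (∑ j ∈ Finset.range (2 * p + 1), g (c + (j + 1))) + g (c + 0) :=
      Finset.sum_range_succ' _ _
    rw [hL, hR]
    have h1' : g (c + 1 + (2 * p + 1)) = g (c + 0) := by
      have : c + 1 + (2 * p + 1) = (c + 0) + (2 * p + 2) := by ring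
      rw [this, hper]
    rw [h1']
    congr 1
    apply Finset.sum_congr rfl
    intro j _
    congr 1
    ring
  have hFc : ∀ c, ∑ j ∈ Finset.range (2 * p + 2), g (c + j)
      = ∑ j ∈ Finset.range (2 * p + 2), g j := by
    intro c
    induction c with
    | zero => simp
    | succ c ih => rw [hF c, ih]
  have hsplit : ∀ c, ∑ j ∈ Finset.range (2 * p + 2), g (c + j) = W c + W (c + (p + 1)) := by
    intro c
    have h2 : 2 * p + 2 = (p + 1) + (p + 1) := by ring
    rw [h2, Finset.sum_range_add]
    congr 1
    apply Finset.sum_congr rfl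
    intro j _
    congr 1
    ring
  have hWall : ∀ c, c ≤ 2 * p + 1 → W c ∈ Submodule.span (ZMod 2) Cset := by
    intro c hc
    rcases le_or_gt c (p + 1) with h | h
    · exact hWin c h
    · set c' : ℕ := c - (p + 1) with hc'_def
      have hc'1 : 1 ≤ c' := by omega
      have hc'p : c' ≤ p := by omega
      have hcc : c = c' + (p + 1) := by omega
      have e1 : W 0 + W (p + 1) = W c' + W c := by
        have ha := hsplit 0
        have hb := hsplit c'
        rw [hFc c'] at hb
        have h0 : (0 : ℕ) + (p + 1) = p + 1 := by ring
        rw [h0] at ha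
        have hz : ∑ j ∈ Finset.range (2 * p + 2), g (0 + j)
            = ∑ j ∈ Finset.range (2 * p + 2), g j := hFc 0
        rw [hz] at ha
        rw [← hcc] at hb
        rw [← ha, ← hb]
      have e2 : W c = W 0 + W (p + 1) - W c' := by
        rw [e1]
        abel
      rw [e2]
      exact sub_mem (add_mem (hWin 0 (by omega)) (hWin (p + 1) le_rfl)) (hWin c' (by omega))
  -- decompose the demand
  have hkg : e K ((k : ℕ) : ZMod K) = g s := by
    simp only [hg_def]
    congr 1
    rw [hks]
  have hWs : W s = (∑ t ∈ Finset.range p, g (s + (t + 1))) + g (s + 0) :=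
    Finset.sum_range_succ' _ _
  have hdemand : e K ((k : ℕ) : ZMod K) = W s - ∑ t ∈ Finset.range p, g (s + (t + 1)) := by
    rw [hkg, hWs]
    simp
  rw [Decodes, hdemand]
  apply sub_mem
  · exact Submodule.span_mono Set.subset_union_left (hWall s hs)
  · apply sum_mem
    intro t ht
    apply Submodule.subset_span
    right
    refine ⟨((k + (t + 1) * m : ℕ) : ZMod K), ⟨t + 1, by omega, by
      simp only [Finset.mem_range] at ht; omega, rfl⟩, ?_⟩
    simp only [hg_def]
    congr 1
    rw [hks]
    push_cast
    ring
end

section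
/- Let K, D, λ be positive integers such that λ divides D, D divides K + λ, and n = (K+λ)/D > 2; set p = D − λ. Consider the index coding problem over GF(2) where receiver R_k demands x_k with side information {x_{k+D}} if k ≤ K − 2D + λ and {x_{k+λ}, x_{k+2λ}, ..., x_{k+D}} if K − 2D + λ < k ≤ K (indices mod K in {1,...,K}). Then the code consisting of the D(n−2) symbols x_{i+(j−1)D} + x_{i+jD} for i = 1,...,D and j = 1,...,n−2, together with the p symbols x_{K−2D+1+λ+i'} + x_{K−D+1+i'} + x_{K−λ+1+(i' mod λ)} for i' = 0,1,...,p−1, has length D(n−2) + p = K − D and allows every receiver to decode its demanded message. -/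
private lemma castEq {K a b : ℕ} (h : a = b) : ((a : ℕ) : ZMod K) = ((b : ℕ) : ZMod K) := by
  rw [h]

private lemma castK {K a b : ℕ} (h : a = b + K) :
    ((a : ℕ) : ZMod K) = ((b : ℕ) : ZMod K) := by
  subst h; push_cast; simp

/-- Case IX code has length `D(n-2) + p = K-D` and every receiver decodes. -/
theorem stmt9 (K D lam n p : ℕ) (hlam : 0 < lam) (hl : lam ∣ D) (hd : D ∣ (K + lam))
    (hn : n = (K + lam) / D) (hn2 : 2 < n) (hp : p = D - lam) :
    D * (n - 2) + p = K - D ∧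
    (∀ k : ℕ, 1 ≤ k → k ≤ K →
      Decodes K
        ({v | ∃ i j : ℕ, 1 ≤ i ∧ i ≤ D ∧ 1 ≤ j ∧ j ≤ n - 2 ∧
            v = e K ((i + (j - 1) * D : ℕ) : ZMod K) + e K ((i + j * D : ℕ) : ZMod K)} ∪
         {v | ∃ i' : ℕ, i' ≤ p - 1 ∧
            v = e K ((K - 2 * D + 1 + lam + i' : ℕ) : ZMod K)
              + e K ((K - D + 1 + i' : ℕ) : ZMod K)
              + e K ((K - lam + 1 + i' % lam : ℕ) : ZMod K)})
        (if k ≤ K - 2 * D + lam then {((k + D : ℕ) : ZMod K)}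
         else {j | ∃ t : ℕ, 1 ≤ t ∧ t ≤ D / lam ∧ j = ((k + t * lam : ℕ) : ZMod K)})
        ((k : ℕ) : ZMod K)) := by
  set m := D / lam with hmdef
  have hD0 : 0 < D := by
    rcases Nat.eq_zero_or_pos D with h | h
    · exfalso; rw [h] at hd; have := Nat.eq_zero_of_zero_dvd hd; omega
    · exact h
  have hlamD : lam ≤ D := Nat.le_of_dvd hD0 hl
  obtain ⟨N, hN⟩ : ∃ N, n * D = N := ⟨_, rfl⟩
  have hKN : K + lam = N := by rw [← hN, hn, Nat.div_mul_cancel hd]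
  obtain ⟨E, hE⟩ : ∃ E, (n - 2) * D = E := ⟨_, rfl⟩
  have hEN : E + 2 * D = N := by
    rw [← hE, ← hN]
    have h2 : n - 2 + 2 = n := by omega
    calc (n-2)*D + 2*D = (n-2+2)*D := (Nat.add_mul _ _ _).symm
      _ = n * D := by rw [h2]
  have hDE : D ≤ E := by
    rw [← hE]
    calc D = 1 * D := (one_mul D).symm
      _ ≤ (n-2)*D := Nat.mul_le_mul_right D (by omega)
  have hmul : m * lam = D := Nat.div_mul_cancel hl
  have hm1 : 1 ≤ m := by
    rcases Nat.eq_zero_or_pos m with h | h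
    · rw [h, zero_mul] at hmul; omega
    · exact h
  have hsub1 : (m - 1) * lam = D - lam := by rw [Nat.sub_mul, one_mul, hmul]
  have hsub2 : (m - 2) * lam = D - 2 * lam := by rw [Nat.sub_mul, hmul]
  -- pointwise GF(2) identities
  have s1 : ∀ x y : ZMod 2, x = (x + y) + y := by decide
  have s2 : ∀ x y : ZMod 2, x = (y + x) + y := by decide
  have s3 : ∀ a b c : ZMod 2, a = (a + b + c) + b + c := by decide
  have s4 : ∀ a b c x y : ZMod 2, a = (a + b + c) + (x + y + c) + x + b + y := by decide
  have s5 : ∀ a b c g : ZMod 2, b = (a + b + c) + (g + a) + c + g := by decide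
  have s6 : ∀ a b g d x : ZMod 2, x = (a + b + x) + (g + a) + (d + b) + g + d := by decide
  have s7 : ∀ a b c : ZMod 2, (a + b) + (b + c) = a + c := by decide
  have z2 : ∀ x : ZMod 2, x + x = 0 := by decide
  -- column (chain) sums
  have colCH : ∀ J, J ≤ n - 2 → ∀ i : ℕ, 1 ≤ i → i ≤ D →
      e K (i : ZMod K) + e K ((i + J * D : ℕ) : ZMod K) ∈
      Submodule.span (ZMod 2) {v : ZMod K → ZMod 2 | ∃ i j : ℕ, 1 ≤ i ∧ i ≤ D ∧ 1 ≤ j ∧ j ≤ n - 2 ∧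
            v = e K ((i + (j - 1) * D : ℕ) : ZMod K) + e K ((i + j * D : ℕ) : ZMod K)} := by
    intro J
    induction J with
    | zero =>
      intro _ i _ _
      have h0 : ((i + 0 * D : ℕ) : ZMod K) = (i : ZMod K) := castEq (by omega)
      rw [h0]
      have hz : e K (i : ZMod K) + e K (i : ZMod K) = 0 := funext fun t => z2 _
      rw [hz]; exact Submodule.zero_mem _
    | succ J ih =>
      intro hJ i h1 h2
      have hmem : e K ((i + J * D : ℕ) : ZMod K) + e K ((i + (J+1) * D : ℕ) : ZMod K) ∈
          Submodule.span (ZMod 2) {v : ZMod K → ZMod 2 | ∃ i j : ℕ, 1 ≤ i ∧ i ≤ D ∧ 1 ≤ j ∧ j ≤ n - 2 ∧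
            v = e K ((i + (j - 1) * D : ℕ) : ZMod K) + e K ((i + j * D : ℕ) : ZMod K)} :=
        Submodule.subset_span ⟨i, J+1, h1, h2, by omega, hJ, by rw [Nat.add_sub_cancel]⟩
      have hsum := Submodule.add_mem _ (ih (by omega) i h1 h2) hmem
      have hkey : (e K (i : ZMod K) + e K ((i + J * D : ℕ) : ZMod K)) +
          (e K ((i + J * D : ℕ) : ZMod K) + e K ((i + (J+1) * D : ℕ) : ZMod K)) =
          e K (i : ZMod K) + e K ((i + (J+1) * D : ℕ) : ZMod K) := funext fun t => s7 _ _ _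
      rw [hkey] at hsum
      exact hsum
  constructor
  · have hE' : D * (n - 2) = E := by rw [mul_comm]; exact hE
    rw [hE']; omega
  intro k hk1 hkK
  simp only [Decodes]
  by_cases hkc1 : k ≤ K - 2 * D + lam
  · -- Case 1 : chain decodes directly
    rw [if_pos hkc1]
    have hkE : k ≤ E := by omega
    obtain ⟨a, b, hab, haD⟩ : ∃ a b, a + D * b = k - 1 ∧ a < D :=
      ⟨(k-1) % D, (k-1)/D, Nat.mod_add_div _ _, Nat.mod_lt _ hD0⟩
    obtain ⟨P, hP⟩ : ∃ P, b * D = P := ⟨_, rfl⟩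
    have hP' : a + P = k - 1 := by rw [← hP, Nat.mul_comm b D]; exact hab
    have hbn : b + 1 ≤ n - 2 := by
      by_contra hcon
      push_neg at hcon
      have hh : (n-2)*D ≤ b*D := Nat.mul_le_mul_right D (by omega)
      rw [hE, hP] at hh
      omega
    have c1 : ((a + 1 + (b + 1 - 1) * D : ℕ) : ZMod K) = ((k : ℕ) : ZMod K) := by
      apply castEq; rw [Nat.add_sub_cancel, hP]; omega
    have c2 : ((a + 1 + (b + 1) * D : ℕ) : ZMod K) = ((k + D : ℕ) : ZMod K) := by
      apply castEq; rw [Nat.add_mul, one_mul, hP]; omega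
    have hg : e K ((k : ℕ) : ZMod K) + e K ((k + D : ℕ) : ZMod K) ∈
        Submodule.span (ZMod 2)
          (({v : ZMod K → ZMod 2 | ∃ i j : ℕ, 1 ≤ i ∧ i ≤ D ∧ 1 ≤ j ∧ j ≤ n - 2 ∧
            v = e K ((i + (j - 1) * D : ℕ) : ZMod K) + e K ((i + j * D : ℕ) : ZMod K)} ∪
           {v : ZMod K → ZMod 2 | ∃ i' : ℕ, i' ≤ p - 1 ∧
            v = e K ((K - 2 * D + 1 + lam + i' : ℕ) : ZMod K)
              + e K ((K - D + 1 + i' : ℕ) : ZMod K)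
              + e K ((K - lam + 1 + i' % lam : ℕ) : ZMod K)}) ∪
           e K '' {((k + D : ℕ) : ZMod K)}) :=
      Submodule.subset_span (Set.mem_union_left _ (Set.mem_union_left _
        ⟨a+1, b+1, by omega, by omega, by omega, hbn, by rw [c1, c2]⟩))
    have hw : e K ((k + D : ℕ) : ZMod K) ∈ e K '' {((k + D : ℕ) : ZMod K)} := ⟨_, rfl, rfl⟩
    have key : e K ((k : ℕ) : ZMod K) =
        (e K ((k : ℕ) : ZMod K) + e K ((k + D : ℕ) : ZMod K)) + e K ((k + D : ℕ) : ZMod K) :=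
      funext fun t => s1 _ _
    rw [key]
    exact Submodule.add_mem _ hg
      (Submodule.subset_span (Set.mem_union_right _ hw))
  · rw [if_neg hkc1]
    have hkE : E < k := by omega
    by_cases hld : lam = D
    · -- m = 1 : wrap-around chain
      have h1s : 1 ≤ k - E := by omega
      have hsD : k - E ≤ D := by omega
      have hc := colCH (n-2) le_rfl (k - E) h1s hsD
      rw [hE] at hc
      have c1 : ((k - E + E : ℕ) : ZMod K) = ((k : ℕ) : ZMod K) := castEq (by omega)
      rw [c1] at hc
      have hcast : ((k + 1 * lam : ℕ) : ZMod K) = ((k - E : ℕ) : ZMod K) :=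
        castK (by rw [one_mul]; omega)
      have hw : e K ((k - E : ℕ) : ZMod K) ∈
          e K '' {j : ZMod K | ∃ t : ℕ, 1 ≤ t ∧ t ≤ m ∧ j = ((k + t * lam : ℕ) : ZMod K)} :=
        ⟨_, ⟨1, le_rfl, hm1, rfl⟩, congrArg (e K) hcast⟩
      have key : e K ((k : ℕ) : ZMod K) =
          (e K ((k - E : ℕ) : ZMod K) + e K ((k : ℕ) : ZMod K)) + e K ((k - E : ℕ) : ZMod K) :=
        funext fun t => s2 _ _
      rw [key]
      exact Submodule.add_mem _
        (Submodule.span_mono (fun x hx => Set.mem_union_left _ (Set.mem_union_left _ hx)) hc)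
        (Submodule.subset_span (Set.mem_union_right _ hw))
    · -- lam < D, m ≥ 2
      have hlamlt : lam < D := lt_of_le_of_ne hlamD hld
      have hm2 : 2 ≤ m := by
        by_contra h
        push_neg at h
        have hm1' : m = 1 := by omega
        rw [hm1', one_mul] at hmul
        omega
      have h2l : 2 * lam ≤ D := by
        have hh := Nat.mul_le_mul_right lam hm2
        rw [hmul] at hh; exact hh
      by_cases hk2 : k ≤ K - D
      · -- Case 2
        obtain ⟨i', hi'⟩ : ∃ i', k = E + 1 + i' := ⟨k - E - 1, by omega⟩
        have hi'p : i' ≤ p - 1 := by omega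
        obtain ⟨q, r, hq, hr, hrl⟩ : ∃ q r, q * lam + r = i' ∧ i' % lam = r ∧ r < lam :=
          ⟨i'/lam, i'%lam, by rw [mul_comm]; exact Nat.div_add_mod i' lam, rfl, Nat.mod_lt _ hlam⟩
        obtain ⟨Q, hQ⟩ : ∃ Q, q * lam = Q := ⟨_, rfl⟩
        have hQr : Q + r = i' := by rw [← hQ]; exact hq
        have hqm : q ≤ m - 2 := by
          by_contra hcon
          push_neg at hcon
          have hh : (m-1) * lam ≤ q * lam := Nat.mul_le_mul_right lam (by omega)
          rw [hsub1, hQ] at hh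
          omega
        have hS : e K ((K - 2 * D + 1 + lam + i' : ℕ) : ZMod K)
              + e K ((K - D + 1 + i' : ℕ) : ZMod K)
              + e K ((K - lam + 1 + r : ℕ) : ZMod K) ∈
            Submodule.span (ZMod 2)
              (({v : ZMod K → ZMod 2 | ∃ i j : ℕ, 1 ≤ i ∧ i ≤ D ∧ 1 ≤ j ∧ j ≤ n - 2 ∧
                v = e K ((i + (j - 1) * D : ℕ) : ZMod K) + e K ((i + j * D : ℕ) : ZMod K)} ∪
               {v : ZMod K → ZMod 2 | ∃ i' : ℕ, i' ≤ p - 1 ∧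
                v = e K ((K - 2 * D + 1 + lam + i' : ℕ) : ZMod K)
                  + e K ((K - D + 1 + i' : ℕ) : ZMod K)
                  + e K ((K - lam + 1 + i' % lam : ℕ) : ZMod K)}) ∪
               e K '' {j : ZMod K | ∃ t : ℕ, 1 ≤ t ∧ t ≤ m ∧ j = ((k + t * lam : ℕ) : ZMod K)}) :=
          Submodule.subset_span (Set.mem_union_left _ (Set.mem_union_right _
            ⟨i', hi'p, by rw [hr]⟩))
        have hw1 : e K ((K - D + 1 + i' : ℕ) : ZMod K) ∈
            e K '' {j : ZMod K | ∃ t : ℕ, 1 ≤ t ∧ t ≤ m ∧ j = ((k + t * lam : ℕ) : ZMod K)} :=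
          ⟨_, ⟨m - 1, by omega, by omega, rfl⟩,
            congrArg (e K) (castEq (by rw [hsub1]; omega))⟩
        have hkc : ((k : ℕ) : ZMod K) = ((K - 2 * D + 1 + lam + i' : ℕ) : ZMod K) :=
          castEq (by omega)
        by_cases hq2b : q = m - 2
        · -- 2b
          have hQv : Q = D - 2 * lam := by rw [← hQ, hq2b, hsub2]
          have hw2 : e K ((K - lam + 1 + r : ℕ) : ZMod K) ∈
              e K '' {j : ZMod K | ∃ t : ℕ, 1 ≤ t ∧ t ≤ m ∧ j = ((k + t * lam : ℕ) : ZMod K)} :=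
            ⟨_, ⟨m, hm1, le_rfl, rfl⟩,
              congrArg (e K) (castEq (by rw [hmul]; omega))⟩
          have key : e K ((K - 2 * D + 1 + lam + i' : ℕ) : ZMod K) =
              (e K ((K - 2 * D + 1 + lam + i' : ℕ) : ZMod K)
                + e K ((K - D + 1 + i' : ℕ) : ZMod K)
                + e K ((K - lam + 1 + r : ℕ) : ZMod K))
              + e K ((K - D + 1 + i' : ℕ) : ZMod K)
              + e K ((K - lam + 1 + r : ℕ) : ZMod K) := funext fun t => s3 _ _ _
          rw [hkc, key]
          exact Submodule.add_mem _ (Submodule.add_mem _ hS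
            (Submodule.subset_span (Set.mem_union_right _ hw1)))
            (Submodule.subset_span (Set.mem_union_right _ hw2))
        · -- 2a
          have hq3 : q ≤ m - 3 := by omega
          have hm3 : 3 ≤ m := by omega
          have h3l : 3 * lam ≤ D := by
            have hh := Nat.mul_le_mul_right lam hm3
            rw [hmul] at hh; exact hh
          have hQ3 : Q ≤ D - 3 * lam := by
            have hh := Nat.mul_le_mul_right lam hq3
            have h3 : (m-3)*lam = D - 3*lam := by rw [Nat.sub_mul, hmul]
            rw [hQ, h3] at hh
            omega
          have hi2 : i' + lam ≤ p - 1 := by omega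
          have hS2 : e K ((K - 2 * D + 1 + lam + (i' + lam) : ℕ) : ZMod K)
                + e K ((K - D + 1 + (i' + lam) : ℕ) : ZMod K)
                + e K ((K - lam + 1 + r : ℕ) : ZMod K) ∈
              Submodule.span (ZMod 2)
                (({v : ZMod K → ZMod 2 | ∃ i j : ℕ, 1 ≤ i ∧ i ≤ D ∧ 1 ≤ j ∧ j ≤ n - 2 ∧
                  v = e K ((i + (j - 1) * D : ℕ) : ZMod K) + e K ((i + j * D : ℕ) : ZMod K)} ∪
                 {v : ZMod K → ZMod 2 | ∃ i' : ℕ, i' ≤ p - 1 ∧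
                  v = e K ((K - 2 * D + 1 + lam + i' : ℕ) : ZMod K)
                    + e K ((K - D + 1 + i' : ℕ) : ZMod K)
                    + e K ((K - lam + 1 + i' % lam : ℕ) : ZMod K)}) ∪
                 e K '' {j : ZMod K | ∃ t : ℕ, 1 ≤ t ∧ t ≤ m ∧ j = ((k + t * lam : ℕ) : ZMod K)}) :=
            Submodule.subset_span (Set.mem_union_left _ (Set.mem_union_right _
              ⟨i' + lam, hi2, by rw [Nat.add_mod_right, hr]⟩))
          have hwa : e K ((K - 2 * D + 1 + lam + (i' + lam) : ℕ) : ZMod K) ∈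
              e K '' {j : ZMod K | ∃ t : ℕ, 1 ≤ t ∧ t ≤ m ∧ j = ((k + t * lam : ℕ) : ZMod K)} :=
            ⟨_, ⟨1, le_rfl, hm1, rfl⟩,
              congrArg (e K) (castEq (by rw [one_mul]; omega))⟩
          have hwc : e K ((K - D + 1 + (i' + lam) : ℕ) : ZMod K) ∈
              e K '' {j : ZMod K | ∃ t : ℕ, 1 ≤ t ∧ t ≤ m ∧ j = ((k + t * lam : ℕ) : ZMod K)} :=
            ⟨_, ⟨m, hm1, le_rfl, rfl⟩,
              congrArg (e K) (castEq (by rw [hmul]; omega))⟩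
          have key : e K ((K - 2 * D + 1 + lam + i' : ℕ) : ZMod K) =
              (e K ((K - 2 * D + 1 + lam + i' : ℕ) : ZMod K)
                + e K ((K - D + 1 + i' : ℕ) : ZMod K)
                + e K ((K - lam + 1 + r : ℕ) : ZMod K))
              + (e K ((K - 2 * D + 1 + lam + (i' + lam) : ℕ) : ZMod K)
                + e K ((K - D + 1 + (i' + lam) : ℕ) : ZMod K)
                + e K ((K - lam + 1 + r : ℕ) : ZMod K))
              + e K ((K - 2 * D + 1 + lam + (i' + lam) : ℕ) : ZMod K)
              + e K ((K - D + 1 + i' : ℕ) : ZMod K)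
              + e K ((K - D + 1 + (i' + lam) : ℕ) : ZMod K) := funext fun t => s4 _ _ _ _ _
          rw [hkc, key]
          exact Submodule.add_mem _ (Submodule.add_mem _ (Submodule.add_mem _
            (Submodule.add_mem _ hS hS2)
            (Submodule.subset_span (Set.mem_union_right _ hwa)))
            (Submodule.subset_span (Set.mem_union_right _ hw1)))
            (Submodule.subset_span (Set.mem_union_right _ hwc))
      · by_cases hk3 : k ≤ K - lam
        · -- Case 3
          obtain ⟨i', hi'⟩ : ∃ i', k = K - D + 1 + i' := ⟨k - (K - D) - 1, by omega⟩
          have hi'p : i' ≤ p - 1 := by omega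
          obtain ⟨q, r, hq, hr, hrl⟩ : ∃ q r, q * lam + r = i' ∧ i' % lam = r ∧ r < lam :=
            ⟨i'/lam, i'%lam, by rw [mul_comm]; exact Nat.div_add_mod i' lam, rfl, Nat.mod_lt _ hlam⟩
          obtain ⟨Q, hQ⟩ : ∃ Q, q * lam = Q := ⟨_, rfl⟩
          have hQr : Q + r = i' := by rw [← hQ]; exact hq
          have hqm : q ≤ m - 2 := by
            by_contra hcon
            push_neg at hcon
            have hh : (m-1) * lam ≤ q * lam := Nat.mul_le_mul_right lam (by omega)
            rw [hsub1, hQ] at hh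
            omega
          have hQ2 : Q ≤ D - 2 * lam := by
            have hh := Nat.mul_le_mul_right lam hqm
            rw [hQ, hsub2] at hh
            exact hh
          have hS : e K ((K - 2 * D + 1 + lam + i' : ℕ) : ZMod K)
                + e K ((K - D + 1 + i' : ℕ) : ZMod K)
                + e K ((K - lam + 1 + r : ℕ) : ZMod K) ∈
              Submodule.span (ZMod 2)
                (({v : ZMod K → ZMod 2 | ∃ i j : ℕ, 1 ≤ i ∧ i ≤ D ∧ 1 ≤ j ∧ j ≤ n - 2 ∧
                  v = e K ((i + (j - 1) * D : ℕ) : ZMod K) + e K ((i + j * D : ℕ) : ZMod K)} ∪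
                 {v : ZMod K → ZMod 2 | ∃ i' : ℕ, i' ≤ p - 1 ∧
                  v = e K ((K - 2 * D + 1 + lam + i' : ℕ) : ZMod K)
                    + e K ((K - D + 1 + i' : ℕ) : ZMod K)
                    + e K ((K - lam + 1 + i' % lam : ℕ) : ZMod K)}) ∪
                 e K '' {j : ZMod K | ∃ t : ℕ, 1 ≤ t ∧ t ≤ m ∧ j = ((k + t * lam : ℕ) : ZMod K)}) :=
            Submodule.subset_span (Set.mem_union_left _ (Set.mem_union_right _
              ⟨i', hi'p, by rw [hr]⟩))
          have hcol := colCH (n-2) le_rfl (1 + i') (by omega) (by omega)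
          rw [hE] at hcol
          have c2 : ((1 + i' + E : ℕ) : ZMod K) = ((K - 2 * D + 1 + lam + i' : ℕ) : ZMod K) :=
            castEq (by omega)
          rw [c2] at hcol
          have hT : (m - 1 - q) * lam = D - lam - Q := by
            rw [Nat.sub_mul, Nat.sub_mul, one_mul, hmul, hQ]
          have hw1 : e K ((K - lam + 1 + r : ℕ) : ZMod K) ∈
              e K '' {j : ZMod K | ∃ t : ℕ, 1 ≤ t ∧ t ≤ m ∧ j = ((k + t * lam : ℕ) : ZMod K)} :=
            ⟨_, ⟨m - 1 - q, by omega, by omega, rfl⟩,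
              congrArg (e K) (castEq (by rw [hT]; omega))⟩
          have hw2 : e K ((1 + i' : ℕ) : ZMod K) ∈
              e K '' {j : ZMod K | ∃ t : ℕ, 1 ≤ t ∧ t ≤ m ∧ j = ((k + t * lam : ℕ) : ZMod K)} :=
            ⟨_, ⟨m, hm1, le_rfl, rfl⟩,
              congrArg (e K) (castK (by rw [hmul]; omega))⟩
          have hkc : ((k : ℕ) : ZMod K) = ((K - D + 1 + i' : ℕ) : ZMod K) := castEq (by omega)
          have key : e K ((K - D + 1 + i' : ℕ) : ZMod K) =
              (e K ((K - 2 * D + 1 + lam + i' : ℕ) : ZMod K)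
                + e K ((K - D + 1 + i' : ℕ) : ZMod K)
                + e K ((K - lam + 1 + r : ℕ) : ZMod K))
              + (e K ((1 + i' : ℕ) : ZMod K) + e K ((K - 2 * D + 1 + lam + i' : ℕ) : ZMod K))
              + e K ((K - lam + 1 + r : ℕ) : ZMod K)
              + e K ((1 + i' : ℕ) : ZMod K) := funext fun t => s5 _ _ _ _
          rw [hkc, key]
          exact Submodule.add_mem _ (Submodule.add_mem _ (Submodule.add_mem _ hS
            (Submodule.span_mono (fun x hx => Set.mem_union_left _ (Set.mem_union_left _ hx)) hcol))
            (Submodule.subset_span (Set.mem_union_right _ hw1)))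
            (Submodule.subset_span (Set.mem_union_right _ hw2))
        · -- Case 4
          obtain ⟨r, hr⟩ : ∃ r, k = K - lam + 1 + r := ⟨k - (K - lam) - 1, by omega⟩
          have hrl : r < lam := by omega
          have hrp : r ≤ p - 1 := by omega
          have hrm : r % lam = r := Nat.mod_eq_of_lt hrl
          have hS : e K ((K - 2 * D + 1 + lam + r : ℕ) : ZMod K)
                + e K ((K - D + 1 + r : ℕ) : ZMod K)
                + e K ((K - lam + 1 + r : ℕ) : ZMod K) ∈
              Submodule.span (ZMod 2)
                (({v : ZMod K → ZMod 2 | ∃ i j : ℕ, 1 ≤ i ∧ i ≤ D ∧ 1 ≤ j ∧ j ≤ n - 2 ∧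
                  v = e K ((i + (j - 1) * D : ℕ) : ZMod K) + e K ((i + j * D : ℕ) : ZMod K)} ∪
                 {v : ZMod K → ZMod 2 | ∃ i' : ℕ, i' ≤ p - 1 ∧
                  v = e K ((K - 2 * D + 1 + lam + i' : ℕ) : ZMod K)
                    + e K ((K - D + 1 + i' : ℕ) : ZMod K)
                    + e K ((K - lam + 1 + i' % lam : ℕ) : ZMod K)}) ∪
                 e K '' {j : ZMod K | ∃ t : ℕ, 1 ≤ t ∧ t ≤ m ∧ j = ((k + t * lam : ℕ) : ZMod K)}) :=
            Submodule.subset_span (Set.mem_union_left _ (Set.mem_union_right _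
              ⟨r, hrp, by rw [hrm]⟩))
          have hcol1 := colCH (n-2) le_rfl (1 + r) (by omega) (by omega)
          rw [hE] at hcol1
          have c1 : ((1 + r + E : ℕ) : ZMod K) = ((K - 2 * D + 1 + lam + r : ℕ) : ZMod K) :=
            castEq (by omega)
          rw [c1] at hcol1
          have hcol2 := colCH (n-2) le_rfl (D - lam + 1 + r) (by omega) (by omega)
          rw [hE] at hcol2
          have c2 : ((D - lam + 1 + r + E : ℕ) : ZMod K) = ((K - D + 1 + r : ℕ) : ZMod K) :=
            castEq (by omega)
          rw [c2] at hcol2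
          have hw1 : e K ((1 + r : ℕ) : ZMod K) ∈
              e K '' {j : ZMod K | ∃ t : ℕ, 1 ≤ t ∧ t ≤ m ∧ j = ((k + t * lam : ℕ) : ZMod K)} :=
            ⟨_, ⟨1, le_rfl, hm1, rfl⟩,
              congrArg (e K) (castK (by rw [one_mul]; omega))⟩
          have hw2 : e K ((D - lam + 1 + r : ℕ) : ZMod K) ∈
              e K '' {j : ZMod K | ∃ t : ℕ, 1 ≤ t ∧ t ≤ m ∧ j = ((k + t * lam : ℕ) : ZMod K)} :=
            ⟨_, ⟨m, hm1, le_rfl, rfl⟩,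
              congrArg (e K) (castK (by rw [hmul]; omega))⟩
          have hkc : ((k : ℕ) : ZMod K) = ((K - lam + 1 + r : ℕ) : ZMod K) := castEq (by omega)
          have key : e K ((K - lam + 1 + r : ℕ) : ZMod K) =
              (e K ((K - 2 * D + 1 + lam + r : ℕ) : ZMod K)
                + e K ((K - D + 1 + r : ℕ) : ZMod K)
                + e K ((K - lam + 1 + r : ℕ) : ZMod K))
              + (e K ((1 + r : ℕ) : ZMod K) + e K ((K - 2 * D + 1 + lam + r : ℕ) : ZMod K))
              + (e K ((D - lam + 1 + r : ℕ) : ZMod K) + e K ((K - D + 1 + r : ℕ) : ZMod K))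
              + e K ((1 + r : ℕ) : ZMod K)
              + e K ((D - lam + 1 + r : ℕ) : ZMod K) := funext fun t => s6 _ _ _ _ _
          rw [hkc, key]
          exact Submodule.add_mem _ (Submodule.add_mem _ (Submodule.add_mem _
            (Submodule.add_mem _ hS
              (Submodule.span_mono (fun x hx => Set.mem_union_left _ (Set.mem_union_left _ hx)) hcol1))
            (Submodule.span_mono (fun x hx => Set.mem_union_left _ (Set.mem_union_left _ hx)) hcol2))
            (Submodule.subset_span (Set.mem_union_right _ hw1)))
            (Submodule.subset_span (Set.mem_union_right _ hw2))
end

section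
/- Let K, D, λ be positive integers with D < K such that λ divides m = K − D and m divides K + λ; set q = (K+λ)/m, p = m − λ, s = m/λ. Consider the index coding problem over GF(2) where receiver R_k demands x_k and has side information {x_{k+1}, x_{k+2}, ..., x_{k+D}} (indices mod K in {1,...,K}). Then the code with the m = K − D symbols: C_k = x_k + x_{k+m} + ... + x_{k+(q−1)m} + x_{k+(q−1)m+λ} + x_{k+(q−1)m+2λ} + ... + x_{k+(q−1)m+(s−2)λ} for k = 1,...,λ; C_k = x_k + x_{k+m} + ... + x_{k+(q−2)m} + x_{k+(q−1)m−λ} for k = λ+1,...,p; and C_k = x_k + x_{k+m} + ... + x_{k+(q−2)m} + x_{k+(q−2)m+λ} + x_{k+(q−2)m+2λ} + ... + x_{k+(q−2)m+(s−1)λ} for k = p+1,...,m, allows every receiver to decode its demanded message. -/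
section Helpers

variable {M : Type*} [AddCommGroup M]

lemma cancel2 (h2 : ∀ v : M, v + v = 0) {u v : M} (h : u + v = 0) : u = v := by
  rw [← zero_add v, ← h, add_assoc, h2, add_zero]

lemma flip2 (h2 : ∀ v : M, v + v = 0) {x y z : M} (h : x + y = z) : x = z + y := by
  rw [← h, add_assoc, h2, add_zero]

lemma helper1 (h2 : ∀ v : M, v + v = 0) {ek a b x t c1 c2 : M} (ha : a = t + ek) (hc1 : c1 = a + x)
    (hc2 : c2 = b + x) : ek = c1 + c2 + (t + b) := by
  apply cancel2 h2
  rw [hc1, hc2, ha]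
  rw [show ek + (t + ek + x + (b + x) + (t + b))
      = (ek + ek) + ((t + t) + ((x + x) + (b + b))) from by abel]
  simp only [h2, add_zero]

lemma helper2 (h2 : ∀ v : M, v + v = 0) {ek s x c1 : M} (hc1 : c1 = ek + s + x) : ek = c1 + (s + x) := by
  apply cancel2 h2
  rw [hc1]
  rw [show ek + (ek + s + x + (s + x)) = (ek + ek) + ((s + s) + (x + x)) from by abel]
  simp only [h2, add_zero]

lemma helper4 (h2 : ∀ v : M, v + v = 0) {cs cb s1 s2 s3 mc fc f0 p2 : M} (hcs : cs = s1 + s2)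
    (hcb : cb = mc + (fc + (s3 + p2))) (hs3 : s3 + fc = f0 + s2) :
    f0 = cs + cb + (s1 + mc + p2) := by
  have hs3' : s3 = f0 + s2 + fc := flip2 h2 hs3
  apply cancel2 h2
  rw [hcs, hcb, hs3']
  rw [show f0 + (s1 + s2 + (mc + (fc + (f0 + s2 + fc + p2))) + (s1 + mc + p2))
      = (f0 + f0) + ((s1 + s1) + ((s2 + s2) + ((mc + mc) + ((fc + fc) + (p2 + p2)))))
      from by abel]
  simp only [h2, add_zero]

end Helpers

/-- Case X code of `m = K-D` symbols (three kinds); every receiver decodes. -/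
theorem stmt10 (K D lam m q p s : ℕ) (hlam : 0 < lam) (hD : 0 < D) (hDK : D < K)
    (hm : m = K - D) (hl : lam ∣ m) (hdvd : m ∣ (K + lam))
    (hq : q = (K + lam) / m) (hp : p = m - lam) (hs : s = m / lam)
    (C : ℕ → ZMod K → ZMod 2)
    (hC1 : ∀ k : ℕ, 1 ≤ k → k ≤ lam → C k =
      (∑ t ∈ Finset.range q, e K ((k + t * m : ℕ) : ZMod K))
        + ∑ u ∈ Finset.range (s - 2), e K ((k + (q - 1) * m + (u + 1) * lam : ℕ) : ZMod K))
    (hC2 : ∀ k : ℕ, lam < k → k ≤ p → C k =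
      (∑ t ∈ Finset.range (q - 1), e K ((k + t * m : ℕ) : ZMod K))
        + e K (((k + (q - 1) * m) - lam : ℕ) : ZMod K))
    (hC3 : ∀ k : ℕ, p < k → k ≤ m → C k =
      (∑ t ∈ Finset.range (q - 1), e K ((k + t * m : ℕ) : ZMod K))
        + ∑ u ∈ Finset.range (s - 1), e K ((k + (q - 2) * m + (u + 1) * lam : ℕ) : ZMod K)) :
    ∀ k : ℕ, 1 ≤ k → k ≤ K →
      Decodes K {v | ∃ i : ℕ, 1 ≤ i ∧ i ≤ m ∧ v = C i}
        {j | ∃ t : ℕ, 1 ≤ t ∧ t ≤ D ∧ j = ((k + t : ℕ) : ZMod K)}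
        ((k : ℕ) : ZMod K) := by
  intro k hk1 hkK
  unfold Decodes
  set S := Submodule.span (ZMod 2)
    ({v | ∃ i : ℕ, 1 ≤ i ∧ i ≤ m ∧ v = C i} ∪
      e K '' {j | ∃ t : ℕ, 1 ≤ t ∧ t ≤ D ∧ j = ((k + t : ℕ) : ZMod K)}) with hS
  have hvv : ∀ v : ZMod K → ZMod 2, v + v = 0 := by
    intro v; funext i
    have : ∀ a : ZMod 2, a + a = 0 := by decide
    exact this (v i)
  have hm0 : 0 < m := by omega
  have hmD : m + D = K := by omega
  have hqm : q * m = K + lam := by rw [hq]; exact Nat.div_mul_cancel hdvd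
  -- q ≥ 2
  have hq2 : 2 ≤ q := by
    rcases q with _ | _ | n
    · simp at hqm; omega
    · simp at hqm; omega
    · omega
  obtain ⟨q', rfl⟩ : ∃ q', q = q' + 2 := ⟨q - 2, by omega⟩
  have hq2m : q' * m + 2 * m = K + lam := by
    have : (q' + 2) * m = q' * m + 2 * m := by ring
    omega
  have hmem_code : ∀ i : ℕ, 1 ≤ i → i ≤ m → C i ∈ S := by
    intro i h1i him
    exact Submodule.subset_span (Or.inl ⟨i, h1i, him, rfl⟩)
  have hmem_side : ∀ x d : ℕ, 1 ≤ d → d ≤ D → (x = k + d ∨ x + K = k + d) →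
      e K ((x : ℕ) : ZMod K) ∈ S := by
    intro x d hd1 hd2 hx
    have hcast : ((x : ℕ) : ZMod K) = ((k + d : ℕ) : ZMod K) := by
      rcases hx with h | h
      · rw [h]
      · rw [← h]; push_cast [ZMod.natCast_self]; ring
    rw [hcast]
    exact Submodule.subset_span (Or.inr ⟨((k + d : ℕ) : ZMod K), ⟨d, hd1, hd2, rfl⟩, rfl⟩)
  -- degenerate case lam = m is contradictory
  have hlm : lam < m := by
    rcases lt_or_eq_of_le (Nat.le_of_dvd hm0 hl) with h | h
    · exact h
    · exfalso
      have hs1 : s = 1 := by rw [hs, h]; exact Nat.div_self hm0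
      have hp0 : p = 0 := by omega
      have h1 := hC1 1 le_rfl hlam
      have h3 := hC3 1 (by omega) hm0
      rw [h1] at h3
      simp only [hs1] at h3
      norm_num at h3
      rw [show q' + 2 = (q' + 1) + 1 from rfl, Finset.sum_range_succ] at h3
      have h0 := add_eq_left.mp h3
      have := congrFun h0 (1 + ((q' + 1 : ℕ) : ZMod K) * (m : ZMod K))
      simp only [e, Pi.single_eq_same, Pi.zero_apply] at this
      exact one_ne_zero this
  have hsl : s * lam = m := by rw [hs]; exact Nat.div_mul_cancel hl
  have hs2 : 2 ≤ s := by
    rcases s with _ | _ | n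
    · simp at hsl; omega
    · simp at hsl; omega
    · omega
  obtain ⟨s', rfl⟩ : ∃ s', s = s' + 2 := ⟨s - 2, by omega⟩
  have hs2l : s' * lam + 2 * lam = m := by
    have : (s' + 2) * lam = s' * lam + 2 * lam := by ring
    omega
  have hpl : lam + p = m := by omega
  have hp1 : 1 ≤ p := by omega
  -- decomposition k = r + t*m
  obtain ⟨r, t, hr1, hrm, hrt⟩ : ∃ r t, 1 ≤ r ∧ r ≤ m ∧ k = r + t * m := by
    refine ⟨(k - 1) % m + 1, (k - 1) / m, by omega, ?_, ?_⟩
    · have := Nat.mod_lt (k - 1) hm0; omega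
    · have h1 := Nat.div_add_mod (k - 1) m
      have h2 : m * ((k - 1) / m) = ((k - 1) / m) * m := mul_comm _ _
      omega
  have htq : t ≤ q' + 1 := by
    by_contra h
    have h1 : (q' + 2) * m ≤ t * m := Nat.mul_le_mul_right m (by omega)
    have h2 : (q' + 2) * m = q' * m + 2 * m := by ring
    omega
  have htlast : t = q' + 1 → r ≤ p := by
    intro ht
    rw [ht] at hrt
    have h1 : (q' + 1) * m = q' * m + m := by ring
    omega
  -- normalize code formulas
  have hq1 : q' + 2 - 1 = q' + 1 := rfl
  have hq0 : q' + 2 - 2 = q' := rfl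
  have hs1' : s' + 2 - 1 = s' + 1 := rfl
  have hs0' : s' + 2 - 2 = s' := rfl
  rcases Nat.lt_or_ge lam r with hlr | hrl
  · -- lam < r
    rcases Nat.lt_or_ge t (q' + 1) with htl | hteq
    · -- case 3 : t ≤ q'
      have htmem : t ∈ Finset.range (q' + 1) := by
        simp only [Finset.mem_range]; omega
      have herase : ∀ t' ∈ (Finset.range (q' + 1)).erase t,
          e K ((r + t' * m : ℕ) : ZMod K) ∈ S := by
        intro t' ht'
        obtain ⟨hne, ht'r⟩ := Finset.mem_erase.mp ht'
        rw [Finset.mem_range] at ht'r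
        rcases Nat.lt_or_ge t t' with hgt | hlt
        · have hds : t * m + (t' - t) * m = t' * m := by
            rw [← Nat.add_mul]; congr 1; omega
          have hub : (t' - t) * m ≤ q' * m := Nat.mul_le_mul_right m (by omega)
          have hlb : 1 * m ≤ (t' - t) * m := Nat.mul_le_mul_right m (by omega)
          exact hmem_side _ ((t' - t) * m) (by omega) (by omega) (Or.inl (by omega))
        · have ht'lt : t' < t := by omega
          have hds : t' * m + (t - t') * m = t * m := by
            rw [← Nat.add_mul]; congr 1; omega
          have hub : (t - t') * m ≤ q' * m := Nat.mul_le_mul_right m (by omega)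
          have hlb : 1 * m ≤ (t - t') * m := Nat.mul_le_mul_right m (by omega)
          exact hmem_side _ (K - (t - t') * m) (by omega) (by omega) (Or.inr (by omega))
      rcases Nat.lt_or_ge p r with hpr | hrp
      · -- type 3 code
        have h3 := hC3 r hpr hrm
        rw [hq1, hq0, hs1'] at h3
        rw [← Finset.add_sum_erase _ (fun t' => e K ((r + t' * m : ℕ) : ZMod K)) htmem,
          ← hrt] at h3
        have hid := helper2 hvv h3
        rw [hid]
        refine Submodule.add_mem _ (hmem_code r (by omega) hrm)
          (Submodule.add_mem _ (Submodule.sum_mem _ herase)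
            (Submodule.sum_mem _ (fun u hu => ?_)))
        rw [Finset.mem_range] at hu
        have hds : t * m + (q' - t) * m = q' * m := by
          rw [← Nat.add_mul]; congr 1; omega
        have hw1 : (q' - t) * m ≤ q' * m := Nat.mul_le_mul_right m (by omega)
        have hu1 : 1 * lam ≤ (u + 1) * lam := Nat.mul_le_mul_right lam (by omega)
        have hu2 : (u + 1) * lam ≤ (s' + 1) * lam := Nat.mul_le_mul_right lam (by omega)
        have hs1m : (s' + 1) * lam = s' * lam + lam := by ring
        exact hmem_side _ ((q' - t) * m + (u + 1) * lam) (by omega) (by omega)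
          (Or.inl (by omega))
      · -- type 2 code
        have h2 := hC2 r hlr hrp
        rw [hq1] at h2
        rw [← Finset.add_sum_erase _ (fun t' => e K ((r + t' * m : ℕ) : ZMod K)) htmem,
          ← hrt] at h2
        have hid := helper2 hvv h2
        rw [hid]
        refine Submodule.add_mem _ (hmem_code r (by omega) (by omega))
          (Submodule.add_mem _ (Submodule.sum_mem _ herase) ?_)
        have hds : t * m + (q' + 1 - t) * m = (q' + 1) * m := by
          rw [← Nat.add_mul]; congr 1; omega
        have h1m : (q' + 1) * m = q' * m + m := by ring
        have hw1 : (q' + 1 - t) * m ≤ (q' + 1) * m := Nat.mul_le_mul_right m (by omega)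
        have hw2 : 1 * m ≤ (q' + 1 - t) * m := Nat.mul_le_mul_right m (by omega)
        exact hmem_side _ ((q' + 1 - t) * m - lam) (by omega) (by omega) (Or.inl (by omega))
    · -- case 4 : t = q' + 1
      have hteq' : t = q' + 1 := by omega
      rw [hteq'] at hrt
      have hrp : r ≤ p := htlast hteq'
      have h1m : (q' + 1) * m = q' * m + m := by ring
      obtain ⟨c, hc1, hcs, hcl, hcu⟩ : ∃ c, 1 ≤ c ∧ c ≤ s' ∧ c * lam + 1 ≤ r ∧
          r ≤ c * lam + lam := by
        refine ⟨(r - 1) / lam, ?_, ?_, ?_, ?_⟩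
        · rw [Nat.one_le_div_iff hlam]; omega
        · have hd : (r - 1) / lam < s' + 1 := by
            rw [Nat.div_lt_iff_lt_mul hlam]
            have h1 : (s' + 1) * lam = s' * lam + lam := by ring
            omega
          omega
        · have := Nat.div_mul_le_self (r - 1) lam; omega
        · have h1 := Nat.div_add_mod (r - 1) lam
          have h2 := Nat.mod_lt (r - 1) hlam
          have h3 : lam * ((r - 1) / lam) = ((r - 1) / lam) * lam := mul_comm _ _
          omega
      -- the type-2 codes in the chain
      have hcode : ∀ j ∈ Finset.range c, C (r - j * lam)
          = (∑ t' ∈ Finset.range (q' + 1), e K ((r - j * lam + t' * m : ℕ) : ZMod K))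
            + e K ((r - (j + 1) * lam + (q' + 1) * m : ℕ) : ZMod K) := by
        intro j hj
        rw [Finset.mem_range] at hj
        have hj1 : (j + 1) * lam = j * lam + lam := by ring
        have hjc : (j + 1) * lam ≤ c * lam := Nat.mul_le_mul_right lam (by omega)
        have h2 := hC2 (r - j * lam) (by omega) (by omega)
        rw [hq1] at h2
        have hidx : r - j * lam + (q' + 1) * m - lam
            = r - (j + 1) * lam + (q' + 1) * m := by omega
        rw [hidx] at h2
        exact h2
      have hsum : (∑ j ∈ Finset.range c, C (r - j * lam))
          = (∑ j ∈ Finset.range c,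
              ∑ t' ∈ Finset.range (q' + 1), e K ((r - j * lam + t' * m : ℕ) : ZMod K))
            + ∑ j ∈ Finset.range c, e K ((r - (j + 1) * lam + (q' + 1) * m : ℕ) : ZMod K) := by
        rw [← Finset.sum_add_distrib]
        exact Finset.sum_congr rfl hcode
      -- the type-1 code ending the chain
      have hb1 := hC1 (r - c * lam) (by omega) (by omega)
      rw [hq1, hs0', Finset.sum_range_succ] at hb1
      have hG : (∑ u ∈ Finset.range s',
            e K ((r - c * lam + (q' + 1) * m + (u + 1) * lam : ℕ) : ZMod K))
          = (∑ j ∈ Finset.range c, e K ((r - j * lam + (q' + 1) * m : ℕ) : ZMod K))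
            + ∑ i ∈ Finset.range (s' - c),
                e K ((r - c * lam + (q' + 1) * m + (c + i + 1) * lam : ℕ) : ZMod K) := by
        have h1' : (∑ u ∈ Finset.range c,
              e K ((r - c * lam + (q' + 1) * m + (u + 1) * lam : ℕ) : ZMod K))
            = ∑ j ∈ Finset.range c, e K ((r - j * lam + (q' + 1) * m : ℕ) : ZMod K) := by
          rw [← Finset.sum_range_reflect
            (fun j => e K ((r - j * lam + (q' + 1) * m : ℕ) : ZMod K)) c]
          refine Finset.sum_congr rfl (fun u hu => ?_)
          rw [Finset.mem_range] at hu
          have hcc : (c - 1 - u) * lam + (u + 1) * lam = c * lam := by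
            rw [← Nat.add_mul]; congr 1; omega
          have hidx : r - c * lam + (q' + 1) * m + (u + 1) * lam
              = r - (c - 1 - u) * lam + (q' + 1) * m := by omega
          rw [hidx]
        rw [← Finset.sum_range_add_sum_Ico _ hcs, Finset.sum_Ico_eq_sum_range, h1']
      rw [hG, add_assoc] at hb1
      have hF : (∑ j ∈ Finset.range c, e K ((r - j * lam + (q' + 1) * m : ℕ) : ZMod K))
          + e K ((r - c * lam + (q' + 1) * m : ℕ) : ZMod K)
          = e K ((k : ℕ) : ZMod K)
            + ∑ j ∈ Finset.range c, e K ((r - (j + 1) * lam + (q' + 1) * m : ℕ) : ZMod K) := by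
        rw [← Finset.sum_range_succ (fun j => e K ((r - j * lam + (q' + 1) * m : ℕ) : ZMod K)) c,
          Finset.sum_range_succ', add_comm]
        have hidx : r - 0 * lam + (q' + 1) * m = k := by omega
        rw [hidx]
      have hid := helper4 hvv hsum hb1 hF
      rw [hid]
      have hMmem : ∀ j, j ≤ c →
          (∑ t' ∈ Finset.range (q' + 1), e K ((r - j * lam + t' * m : ℕ) : ZMod K)) ∈ S := by
        intro j hj
        refine Submodule.sum_mem _ (fun t' ht' => ?_)
        rw [Finset.mem_range] at ht'
        have hjl : j * lam ≤ c * lam := Nat.mul_le_mul_right lam hj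
        have hds : t' * m + (q' + 1 - t') * m = (q' + 1) * m := by
          rw [← Nat.add_mul]; congr 1; omega
        have hwu : (q' + 1 - t') * m ≤ (q' + 1) * m := Nat.mul_le_mul_right m (by omega)
        have hwl : 1 * m ≤ (q' + 1 - t') * m := Nat.mul_le_mul_right m (by omega)
        exact hmem_side _ (K - (j * lam + (q' + 1 - t') * m)) (by omega) (by omega)
          (Or.inr (by omega))
      refine Submodule.add_mem _ (Submodule.add_mem _
        (Submodule.sum_mem _ (fun j hj => ?_))
        (hmem_code (r - c * lam) (by omega) (by omega)))
        (Submodule.add_mem _ (Submodule.add_mem _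
          (Submodule.sum_mem _ (fun j hj => hMmem j (by
            rw [Finset.mem_range] at hj; omega)))
          (hMmem c le_rfl))
          (Submodule.sum_mem _ (fun i hi => ?_)))
      · rw [Finset.mem_range] at hj
        have hjl : j * lam ≤ c * lam := Nat.mul_le_mul_right lam (by omega)
        exact hmem_code (r - j * lam) (by omega) (by omega)
      · rw [Finset.mem_range] at hi
        have hl1 : 1 * lam ≤ (i + 1) * lam := Nat.mul_le_mul_right lam (by omega)
        have hl2 : (i + 1) * lam ≤ s' * lam := Nat.mul_le_mul_right lam (by omega)
        have hsplit : (c + i + 1) * lam = c * lam + (i + 1) * lam := by ring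
        exact hmem_side _ ((i + 1) * lam) (by omega) (by omega) (Or.inl (by omega))
  · -- r ≤ lam
    rcases Nat.eq_zero_or_pos t with ht0 | ht1
    · -- case 1 : k = r ≤ lam
      have h0m : t * m = 0 := by rw [ht0]; ring
      have hklam : k ≤ lam := by omega
      have h1m : (q' + 1) * m = q' * m + m := by ring
      have h1 := hC1 k hk1 hklam
      rw [hq1, hs0', Finset.sum_range_succ, add_assoc] at h1
      have h3 := hC3 (k + p) (by omega) (by omega)
      rw [hq1, hq0, hs1'] at h3
      have hA : (∑ t' ∈ Finset.range (q' + 1), e K ((k + t' * m : ℕ) : ZMod K))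
          = (∑ t' ∈ Finset.range q', e K ((k + (t' + 1) * m : ℕ) : ZMod K))
            + e K ((k : ℕ) : ZMod K) := by
        rw [Finset.sum_range_succ']
        norm_num
      have hX : (∑ u ∈ Finset.range (s' + 1),
            e K ((k + p + q' * m + (u + 1) * lam : ℕ) : ZMod K))
          = e K ((k + (q' + 1) * m : ℕ) : ZMod K)
            + ∑ u ∈ Finset.range s', e K ((k + (q' + 1) * m + (u + 1) * lam : ℕ) : ZMod K) := by
        rw [Finset.sum_range_succ', add_comm]
        congr 1
        · have hidx : k + p + q' * m + (0 + 1) * lam = k + (q' + 1) * m := by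
            have : (0 + 1) * lam = lam := by ring
            omega
          rw [hidx]
        · refine Finset.sum_congr rfl (fun u _ => ?_)
          have h2l : (u + 1 + 1) * lam = (u + 1) * lam + lam := by ring
          have hidx : k + p + q' * m + (u + 1 + 1) * lam
              = k + (q' + 1) * m + (u + 1) * lam := by omega
          rw [hidx]
      rw [hX] at h3
      have hid := helper1 hvv hA h1 h3
      rw [hid]
      refine Submodule.add_mem _ (Submodule.add_mem _
        (hmem_code k hk1 (by omega)) (hmem_code (k + p) (by omega) (by omega)))
        (Submodule.add_mem _ ?_ ?_)
      · refine Submodule.sum_mem _ (fun t' ht' => ?_)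
        rw [Finset.mem_range] at ht'
        have hub : (t' + 1) * m ≤ q' * m := Nat.mul_le_mul_right m (by omega)
        have hlb : 1 * m ≤ (t' + 1) * m := Nat.mul_le_mul_right m (by omega)
        exact hmem_side _ ((t' + 1) * m) (by omega) (by omega) (Or.inl (by omega))
      · refine Submodule.sum_mem _ (fun t' ht' => ?_)
        rw [Finset.mem_range] at ht'
        have hub : t' * m ≤ q' * m := Nat.mul_le_mul_right m (by omega)
        exact hmem_side _ (p + t' * m) (by omega) (by omega) (Or.inl (by omega))
    · -- case 2 : t ≥ 1
      have h1 := hC1 r hr1 hrl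
      rw [hq1, hs0'] at h1
      have htmem : t ∈ Finset.range (q' + 2) := by
        simp only [Finset.mem_range]; omega
      rw [← Finset.add_sum_erase _ (fun t' => e K ((r + t' * m : ℕ) : ZMod K)) htmem] at h1
      rw [← hrt] at h1
      have hid := helper2 hvv h1
      rw [hid]
      refine Submodule.add_mem _ (hmem_code r hr1 (by omega)) (Submodule.add_mem _ ?_ ?_)
      · refine Submodule.sum_mem _ (fun t' ht' => ?_)
        obtain ⟨hne, ht'r⟩ := Finset.mem_erase.mp ht'
        rw [Finset.mem_range] at ht'r
        rcases Nat.lt_or_ge t t' with hgt | hlt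
        · -- t' > t
          have hds : t * m + (t' - t) * m = t' * m := by
            rw [← Nat.add_mul]; congr 1; omega
          have hub : (t' - t) * m ≤ q' * m := Nat.mul_le_mul_right m (by omega)
          have hlb : 1 * m ≤ (t' - t) * m := Nat.mul_le_mul_right m (by omega)
          exact hmem_side _ ((t' - t) * m) (by omega) (by omega) (Or.inl (by omega))
        · -- t' < t
          have ht'lt : t' < t := by omega
          have hds : t' * m + (t - t') * m = t * m := by
            rw [← Nat.add_mul]; congr 1; omega
          have hub : (t - t') * m ≤ (q' + 1) * m := Nat.mul_le_mul_right m (by omega)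
          have h1m : (q' + 1) * m = q' * m + m := by ring
          have hlb : 1 * m ≤ (t - t') * m := Nat.mul_le_mul_right m (by omega)
          exact hmem_side _ (K - (t - t') * m) (by omega) (by omega) (Or.inr (by omega))
      · refine Submodule.sum_mem _ (fun u hu => ?_)
        rw [Finset.mem_range] at hu
        have hds : t * m + (q' + 1 - t) * m = (q' + 1) * m := by
          rw [← Nat.add_mul]; congr 1; omega
        have h1m : (q' + 1) * m = q' * m + m := by ring
        have hw1 : (q' + 1 - t) * m ≤ q' * m := Nat.mul_le_mul_right m (by omega)
        have hu1 : 1 * lam ≤ (u + 1) * lam := Nat.mul_le_mul_right lam (by omega)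
        have hu2 : (u + 1) * lam ≤ s' * lam := Nat.mul_le_mul_right lam (by omega)
        exact hmem_side _ ((q' + 1 - t) * m + (u + 1) * lam) (by omega) (by omega)
          (Or.inl (by omega))
end

section
/- Let n ≥ 2 and consider the directed cycle C_n on vertices {1,...,n} with edges (k, k+1 mod n). The minrank of C_n over GF(2) is exactly n − 1: the (n−1)-symbol code {x_k + x_{k+1} : k = 1,...,n−1} lets every receiver R_k (demanding x_k, knowing x_{k+1 mod n}) decode, and no matrix fitting C_n has GF(2)-rank less than n − 1. -/
/-!
Over GF(2) the code symbols are the differences `x_j - x_{j+1}` for `j ≠ 0`; the cyclic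
differences sum to zero, so the missing one for `j = 0` is the sum of the others, and receiver `k`
adds `x_{k+1}` to `x_k - x_{k+1}`. Conversely, deleting vertex `n - 1` leaves the path `0 → 1 → ⋯ → n - 2`, on
which every fitting matrix is upper triangular with unit diagonal, hence of rank `n - 1`.
-/

theorem ZMod.natCast_inj_of_lt {n a b : ℕ} (ha : a < n) (hb : b < n)
    (h : (a : ZMod n) = b) : a = b := by
  rwa [ZMod.natCast_eq_natCast_iff', Nat.mod_eq_of_lt ha, Nat.mod_eq_of_lt hb] at h

/-- The differences `f j - f (j + c)` over a finite group sum to zero, so each one is determined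
by all the others. -/
theorem sub_add_mem_of_forall_ne {G M S : Type*} [AddCommGroup G] [Fintype G] [AddCommGroup M]
    [SetLike S M] [AddSubgroupClass S M] (s : S) (f : G → M) (c g₀ : G)
    (h : ∀ j ≠ g₀, f j - f (j + c) ∈ s) (j : G) : f j - f (j + c) ∈ s := by
  classical
  obtain rfl | hj := eq_or_ne j g₀
  · have hsum : ∑ j, (f j - f (j + c)) = 0 := by
      rw [Finset.sum_sub_distrib,
        Fintype.sum_equiv (Equiv.addRight c) (fun x => f (x + c)) f fun _ => rfl, sub_self]
    rw [← Finset.add_sum_erase _ _ (Finset.mem_univ j), add_eq_zero_iff_eq_neg] at hsum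
    rw [hsum]
    exact neg_mem <| sum_mem fun i hi => h i (Finset.ne_of_mem_erase hi)
  · exact h j hj

/-- On the vertices `f i` all edges go forward, so the principal submatrix of `A` there is upper
triangular with unit diagonal. -/
theorem Fits.card_le_rank {V ι : Type*} [Fintype V] [Fintype ι] [LinearOrder ι]
    {E : V → V → Prop} {A : Matrix V V (ZMod 2)} (hA : Fits E A) {f : ι → V}
    (hf : Function.Injective f) (hforward : ∀ i j, E (f i) (f j) → i ≤ j) :
    Fintype.card ι ≤ A.rank := by
  classical
  have htri : (A.submatrix f f).IsUpperTriangular := fun i j hji =>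
    hA.2 _ _ (hf.ne hji.ne') fun hE => (hforward i j hE).not_gt hji
  have hdet : (A.submatrix f f).det = 1 := by
    simp [Matrix.det_of_isUpperTriangular htri, hA.1]
  calc Fintype.card ι = (A.submatrix f f).rank :=
        (Matrix.rank_of_isUnit _ ((Matrix.isUnit_iff_isUnit_det _).2 (hdet ▸ isUnit_one))).symm
    _ ≤ A.rank := Matrix.rank_submatrix_le A f f

theorem decodes_of_sub_mem {K : ℕ} {C : Set (ZMod K → ZMod 2)} {k : ZMod K}
    (h : e K k - e K (k + 1) ∈ Submodule.span (ZMod 2) C) : Decodes K C {k + 1} k := by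
  have hside : e K (k + 1) ∈ Submodule.span (ZMod 2) (C ∪ e K '' {k + 1}) :=
    Submodule.subset_span (Or.inr ⟨k + 1, rfl, rfl⟩)
  rw [Decodes, ← sub_add_cancel (e K k) (e K (k + 1))]
  exact add_mem (Submodule.span_mono Set.subset_union_left h) hside

theorem stmt12_general (n : ℕ) [NeZero n] :
    (∀ k : ZMod n,
      Decodes n
        {v | ∃ i : ℕ, 1 ≤ i ∧ i ≤ n - 1 ∧
          v = e n ((i : ℕ) : ZMod n) + e n ((i + 1 : ℕ) : ZMod n)}
        {k + 1} k) ∧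
    (∀ A : Matrix (ZMod n) (ZMod n) (ZMod 2),
        Fits (fun i j => j = i + 1) A → n - 1 ≤ A.rank) := by
  refine ⟨fun k => decodes_of_sub_mem ?_, fun A hA => ?_⟩
  · have hcode : ∀ j ≠ (0 : ZMod n), e n j - e n (j + 1) ∈ Submodule.span (ZMod 2)
        {v | ∃ i : ℕ, 1 ≤ i ∧ i ≤ n - 1 ∧
          v = e n ((i : ℕ) : ZMod n) + e n ((i + 1 : ℕ) : ZMod n)} := fun j hj => by
      have hj1 : 1 ≤ j.val := Nat.one_le_iff_ne_zero.2 ((ZMod.val_ne_zero j).2 hj)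
      refine Submodule.subset_span ⟨j.val, hj1, by have := j.val_lt; omega, ?_⟩
      simp [ZModModule.sub_eq_add]
    exact sub_add_mem_of_forall_ne _ (e n) 1 0 hcode k
  · have hpath : ∀ i j : Fin (n - 1), ((j : ℕ) : ZMod n) = (i : ℕ) + 1 → i ≤ j := fun i j h => by
      rw [← Nat.cast_add_one] at h
      have := ZMod.natCast_inj_of_lt (by omega) (by omega) h
      exact Fin.le_iff_val_le_val.2 (by omega)
    simpa only [Fintype.card_fin] using
      hA.card_le_rank (f := fun i : Fin (n - 1) => ((i : ℕ) : ZMod n))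
        (fun i j h => Fin.ext <| ZMod.natCast_inj_of_lt (by omega) (by omega) h) hpath

/-- minrank of the directed `n`-cycle over GF(2) is exactly `n-1`:
the code `{x_k + x_{k+1} : k = 1,...,n-1}` lets every receiver decode, and every fitting
matrix has rank at least `n-1`. -/
theorem stmt12 (n : ℕ) [NeZero n] (hn : 2 ≤ n) :
    (∀ k : ZMod n,
      Decodes n
        {v | ∃ i : ℕ, 1 ≤ i ∧ i ≤ n - 1 ∧
          v = e n ((i : ℕ) : ZMod n) + e n ((i + 1 : ℕ) : ZMod n)}
        {k + 1} k) ∧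
    (∀ A : Matrix (ZMod n) (ZMod n) (ZMod 2),
        Fits (fun i j => j = i + 1) A → n - 1 ≤ A.rank) :=
  stmt12_general n
end

section
/- Let K, D be positive integers with 1 ≤ D ≤ K − 2 and consider the index coding problem over GF(2) where receiver R_k demands x_k and knows {x_{k+1}, ..., x_{k+D}} (indices mod K). Any valid scalar linear index code has length at least K − D. Equivalently, any matrix A over GF(2) fitting the side-information graph (a_{k,k}=1, a_{k,j}=0 unless j ∈ {k+1,...,k+D} mod K) has rank at least K − D. -/
lemma span_image_e_vanish {K : ℕ} (s : Set (ZMod K)) (j : ZMod K) (hj : j ∉ s)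
    (v : ZMod K → ZMod 2) (hv : v ∈ Submodule.span (ZMod 2) (e K '' s)) : v j = 0 := by
  have : Submodule.span (ZMod 2) (e K '' s) ≤ LinearMap.ker (LinearMap.proj j) := by
    rw [Submodule.span_le]
    rintro _ ⟨i, hi, rfl⟩
    simp only [SetLike.mem_coe, LinearMap.mem_ker, LinearMap.proj_apply]
    exact Pi.single_eq_of_ne (fun h => hj (by rw [h]; exact hi)) 1
  exact this hv

lemma rank_part (K D : ℕ) [NeZero K] (hD : 1 ≤ D) (hDK : D ≤ K - 2)
    (A : Matrix (ZMod K) (ZMod K) (ZMod 2))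
    (hA : Fits (fun i j => ∃ t : ℕ, 1 ≤ t ∧ t ≤ D ∧ j = i + (t : ZMod K)) A) :
    K - D ≤ A.rank := by
  have hK3 : 3 ≤ K := by omega
  set m := K - D with hm
  have hmK : m ≤ K := Nat.sub_le _ _
  have hmD : m + D = K := by omega
  -- row/col selection
  let f : Fin m → ZMod K := fun i => (i.val : ZMod K)
  let B : Matrix (Fin m) (Fin m) (ZMod 2) := A.submatrix f f
  have hval : ∀ i : Fin m, (f i).val = i.val := fun i =>
    ZMod.val_cast_of_lt (lt_of_lt_of_le i.isLt hmK)
  have hBtri : B.BlockTriangular id := by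
    intro i j hji
    simp only [id] at hji
    have hne : f i ≠ f j := by
      intro h
      have := congrArg ZMod.val h
      rw [hval, hval] at this
      exact hji.ne' (Fin.ext this)
    refine hA.2 (f i) (f j) hne ?_
    rintro ⟨t, ht1, htD, hEq⟩
    have : (j.val : ZMod K) = ((i.val + t : ℕ) : ZMod K) := by
      push_cast
      show f j = f i + (t : ZMod K)
      exact hEq
    have hiT : i.val + t < K := by
      have := i.isLt; omega
    have hjv := congrArg ZMod.val this
    rw [ZMod.val_cast_of_lt (lt_of_lt_of_le j.isLt hmK),
        ZMod.val_cast_of_lt hiT] at hjv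
    omega
  have hBdiag : ∀ i, B i i = 1 := fun i => hA.1 (f i)
  have hdet : B.det = 1 := by
    rw [Matrix.det_of_upperTriangular hBtri]
    simp [hBdiag]
  have hBunit : IsUnit B := by
    rw [Matrix.isUnit_iff_isUnit_det, hdet]; exact isUnit_one
  have hBli : LinearIndependent (ZMod 2) B :=
    Matrix.linearIndependent_rows_iff_isUnit.mpr hBunit
  have hcomp : (LinearMap.funLeft (ZMod 2) (ZMod 2) f) ∘ (fun i => A (f i)) = B := by
    ext i j; rfl
  have hli : LinearIndependent (ZMod 2) (fun i => A (f i)) := by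
    apply LinearIndependent.of_comp (LinearMap.funLeft (ZMod 2) (ZMod 2) f)
    rw [hcomp]; exact hBli
  have hcard : Fintype.card (Fin m) =
      Set.finrank (ZMod 2) (Set.range (fun i => A (f i))) :=
    linearIndependent_iff_card_eq_finrank_span.mp hli
  rw [Matrix.rank_eq_finrank_span_row]
  have hle : Submodule.span (ZMod 2) (Set.range (fun i => A (f i))) ≤
      Submodule.span (ZMod 2) (Set.range A) := by
    apply Submodule.span_mono
    rintro _ ⟨i, rfl⟩; exact ⟨f i, rfl⟩
  calc m = Fintype.card (Fin m) := (Fintype.card_fin m).symm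
    _ = Set.finrank (ZMod 2) (Set.range (fun i => A (f i))) := hcard
    _ ≤ _ := Submodule.finrank_mono hle


/-- for the symmetric one-sided problem with side information
`{x_{k+1},...,x_{k+D}}`, any valid scalar linear code has length at least `K-D`;
equivalently, any fitting matrix has rank at least `K-D`. -/
theorem stmt17 (K D : ℕ) [NeZero K] (hD : 1 ≤ D) (hDK : D ≤ K - 2) :
    (∀ (N : ℕ) (z : Fin N → ZMod K → ZMod 2),
        (∀ k : ZMod K,
          Decodes K (Set.range z)
            {j | ∃ t : ℕ, 1 ≤ t ∧ t ≤ D ∧ j = k + (t : ZMod K)} k) → K - D ≤ N) ∧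
    (∀ A : Matrix (ZMod K) (ZMod K) (ZMod 2),
        Fits (fun i j => ∃ t : ℕ, 1 ≤ t ∧ t ≤ D ∧ j = i + (t : ZMod K)) A →
          K - D ≤ A.rank) := by
  have hK3 : 3 ≤ K := by omega
  have hself : ∀ k : ZMod K, k ∉ {j | ∃ t : ℕ, 1 ≤ t ∧ t ≤ D ∧ j = k + (t : ZMod K)} := by
    rintro k ⟨t, ht1, htD, hEq⟩
    have : (t : ZMod K) = 0 := by
      have := hEq.symm
      rwa [left_eq_add] at hEq
    rw [ZMod.natCast_eq_zero_iff] at this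
    have := Nat.le_of_dvd (by omega) this
    omega
  refine ⟨?_, fun A hA => rank_part K D hD hDK A hA⟩
  intro N z hz
  -- decompose each demand vector
  have hdec : ∀ k : ZMod K, ∃ u ∈ Submodule.span (ZMod 2) (Set.range z),
      ∃ w ∈ Submodule.span (ZMod 2)
        (e K '' {j | ∃ t : ℕ, 1 ≤ t ∧ t ≤ D ∧ j = k + (t : ZMod K)}), u + w = e K k := by
    intro k
    have := hz k
    rw [Decodes, Submodule.span_union] at this
    exact Submodule.mem_sup.mp this
  choose u hu w hw huw using hdec
  set A : Matrix (ZMod K) (ZMod K) (ZMod 2) := fun k => e K k - w k with hAdef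
  have hArow : ∀ k, A k = u k := by
    intro k
    show e K k - w k = u k
    rw [← huw k]
    abel
  have hAfits : Fits (fun i j => ∃ t : ℕ, 1 ≤ t ∧ t ≤ D ∧ j = i + (t : ZMod K)) A := by
    constructor
    · intro k
      have hwk : w k k = 0 := span_image_e_vanish _ k (hself k) _ (hw k)
      show e K k k - w k k = 1
      rw [hwk, e, Pi.single_eq_same]
      ring
    · intro i j hij hE
      have hwj : w i j = 0 := by
        refine span_image_e_vanish _ j ?_ _ (hw i)
        exact fun hmem => hE hmem
      have hej : e K i j = 0 := Pi.single_eq_of_ne (Ne.symm hij) 1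
      show e K i j - w i j = 0
      rw [hwj, hej]; ring
  have h1 : K - D ≤ A.rank := rank_part K D hD hDK A hAfits
  have h2 : A.rank ≤ N := by
    rw [Matrix.rank_eq_finrank_span_row]
    have hle : Submodule.span (ZMod 2) (Set.range A) ≤
        Submodule.span (ZMod 2) (Set.range z) := by
      rw [Submodule.span_le]
      rintro _ ⟨k, rfl⟩
      rw [hArow k]
      exact hu k
    calc Module.finrank (ZMod 2) (Submodule.span (ZMod 2) (Set.range A))
        ≤ Module.finrank (ZMod 2) (Submodule.span (ZMod 2) (Set.range z)) :=
          Submodule.finrank_mono hle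
      _ ≤ Fintype.card (Fin N) := finrank_range_le_card z
      _ = N := Fintype.card_fin N
  omega
end
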